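/- arXiv:1705.04544 — 7 statements merged into one kernel-verified Lean document; each statement's English description precedes it below -/
import Mathlib

section
/- Let C_n be a cycle with n unit-length edges, α ≥ 1, β ≥ 0, and define λ' = min over d ∈ {1,...,n−1} of ⌊d − min{d, n−d}/α + β⌋ / d and λ = min{1, λ'}. Then every edge subset C that is a feasible (α,β)-contraction of C_n (i.e., every subpath P of length d satisfies |E(P) ∩ C| ≤ ⌊d − min{d, n−d}/α + β⌋) satisfies |C| ≤ ⌊λn⌋. -/
open Classical

lemma shift_card_aux (n t : ℕ) (hn : 2 ≤ n) (C : Finset ℕ) (hC : C ⊆ Finset.Icc 1 n) :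
    ((Finset.range n).filter (fun k => (k + t) % n + 1 ∈ C)).card = C.card := by
  apply Finset.card_bij (fun k _ => (k + t) % n + 1)
  · intro a ha
    simp only [Finset.mem_filter, Finset.mem_range] at ha
    exact ha.2
  · intro a ha b hb h
    simp only [Finset.mem_filter, Finset.mem_range] at ha hb
    have h' : (a + t) % n = (b + t) % n := by omega
    have h2 : a ≡ b [MOD n] := Nat.ModEq.add_right_cancel' t h'
    unfold Nat.ModEq at h2
    rw [Nat.mod_eq_of_lt ha.1, Nat.mod_eq_of_lt hb.1] at h2
    exact h2
  · intro c hc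
    have hcle := hC hc
    simp only [Finset.mem_Icc] at hcle
    have hr : t % n < n := Nat.mod_lt _ (by omega)
    refine ⟨(c - 1 + (n - t % n)) % n, ?_, ?_⟩
    · have hlt : (c - 1 + (n - t % n)) % n < n := Nat.mod_lt _ (by omega)
      have hkey : ((c - 1 + (n - t % n)) % n + t) % n = c - 1 := by
        rw [Nat.mod_add_mod, Nat.add_mod (c - 1 + (n - t % n)) t n, Nat.mod_add_mod]
        set r := t % n with hrdef
        have h3 : c - 1 + (n - r) + r = c - 1 + n := by omega
        rw [h3, Nat.add_mod_right, Nat.mod_eq_of_lt (by omega)]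
      simp only [Finset.mem_filter, Finset.mem_range]
      refine ⟨hlt, ?_⟩
      rw [hkey]
      have : c - 1 + 1 = c := by omega
      rw [this]
      exact hc
    · have hkey : ((c - 1 + (n - t % n)) % n + t) % n = c - 1 := by
        rw [Nat.mod_add_mod, Nat.add_mod (c - 1 + (n - t % n)) t n, Nat.mod_add_mod]
        set r := t % n with hrdef
        have h3 : c - 1 + (n - r) + r = c - 1 + n := by omega
        rw [h3, Nat.add_mod_right, Nat.mod_eq_of_lt (by omega)]
      rw [hkey]
      omega

lemma sum_card_aux (n d : ℕ) (hn : 2 ≤ n) (C : Finset ℕ) (hC : C ⊆ Finset.Icc 1 n) :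
    ∑ k ∈ Finset.range n, ((Finset.range d).filter (fun t => (k + t) % n + 1 ∈ C)).card
      = d * C.card := by
  simp_rw [Finset.card_filter]
  rw [Finset.sum_comm]
  have h : ∀ t ∈ Finset.range d,
      (∑ k ∈ Finset.range n, if (k + t) % n + 1 ∈ C then 1 else 0) = C.card := by
    intro t _
    rw [← Finset.card_filter]
    exact shift_card_aux n t hn C hC
  rw [Finset.sum_congr rfl h, Finset.sum_const, Finset.card_range, smul_eq_mul]

theorem cycle_contraction_upper_bound (n : ℕ) (hn : 2 ≤ n) (α β : ℝ) (hα : 1 ≤ α) (hβ : 0 ≤ β)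
    (C : Finset ℕ) (hC : C ⊆ Finset.Icc 1 n)
    (feas : ∀ k d : ℕ, 1 ≤ d → d ≤ n - 1 →
      (((Finset.range d).filter (fun t => (k + t) % n + 1 ∈ C)).card : ℤ)
        ≤ ⌊(d : ℝ) - min (d : ℝ) ((n : ℝ) - d) / α + β⌋) :
    (C.card : ℤ) ≤
      ⌊min 1 (sInf {x : ℝ | ∃ d : ℕ, 1 ≤ d ∧ d ≤ n - 1 ∧
          x = ((⌊(d : ℝ) - min (d : ℝ) ((n : ℝ) - d) / α + β⌋ : ℤ) : ℝ) / d}) * n⌋ := by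
  set g : ℕ → ℝ := fun d =>
    ((⌊(d : ℝ) - min (d : ℝ) ((n : ℝ) - d) / α + β⌋ : ℤ) : ℝ) / d with hg
  set S : Set ℝ := {x : ℝ | ∃ d : ℕ, 1 ≤ d ∧ d ≤ n - 1 ∧
      x = ((⌊(d : ℝ) - min (d : ℝ) ((n : ℝ) - d) / α + β⌋ : ℤ) : ℝ) / d} with hS
  have hSeq : S = g '' (Set.Icc 1 (n - 1)) := by
    ext x
    constructor
    · rintro ⟨d, hd1, hd2, rfl⟩
      exact ⟨d, ⟨hd1, hd2⟩, rfl⟩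
    · rintro ⟨d, ⟨hd1, hd2⟩, rfl⟩
      exact ⟨d, hd1, hd2, rfl⟩
  have hfin : S.Finite := by
    rw [hSeq]; exact (Set.finite_Icc _ _).image g
  have hne : S.Nonempty := ⟨g 1, 1, le_refl 1, by omega, rfl⟩
  have hmem : sInf S ∈ S := hne.csInf_mem hfin
  obtain ⟨d₀, hd1, hd2, heq⟩ := hmem
  rw [heq]
  set M₀ : ℤ := ⌊(d₀ : ℝ) - min (d₀ : ℝ) ((n : ℝ) - d₀) / α + β⌋ with hM
  rw [Int.le_floor]
  have hcardn : C.card ≤ n := by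
    have := Finset.card_le_card hC
    rwa [Nat.card_Icc, Nat.add_sub_cancel] at this
  have hd0pos : (0 : ℝ) < d₀ := by exact_mod_cast hd1
  -- main counting inequality
  have hsum : (d₀ * C.card : ℤ) ≤ n * M₀ := by
    have h1 : (∑ k ∈ Finset.range n,
        (((Finset.range d₀).filter (fun t => (k + t) % n + 1 ∈ C)).card : ℤ))
          = (d₀ * C.card : ℤ) := by
      rw [← Nat.cast_sum]
      exact_mod_cast congrArg (Nat.cast : ℕ → ℤ) (sum_card_aux n d₀ hn C hC)
    have h2 : (∑ k ∈ Finset.range n,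
        (((Finset.range d₀).filter (fun t => (k + t) % n + 1 ∈ C)).card : ℤ))
          ≤ ∑ _k ∈ Finset.range n, M₀ :=
      Finset.sum_le_sum (fun k _ => feas k d₀ hd1 hd2)
    simp only [Finset.sum_const, Finset.card_range, nsmul_eq_mul] at h2
    rw [← h1]
    exact h2
  have hb1 : (C.card : ℝ) ≤ 1 * (n : ℝ) := by
    rw [one_mul]; exact_mod_cast hcardn
  have hb2 : (C.card : ℝ) ≤ (M₀ : ℝ) / d₀ * n := by
    rw [div_mul_eq_mul_div, le_div_iff₀ hd0pos]
    have : ((d₀ : ℤ) * C.card : ℝ) ≤ ((n : ℤ) * M₀ : ℝ) := by exact_mod_cast hsum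
    push_cast at this ⊢
    nlinarith [this]
  calc (C.card : ℝ) ≤ min (1 * (n : ℝ)) ((M₀ : ℝ) / d₀ * n) := le_min hb1 hb2
    _ = min 1 ((M₀ : ℝ) / d₀) * n := by
        rw [min_mul_of_nonneg _ _ (by positivity : (0:ℝ) ≤ (n:ℝ))]
end

section
/- Let T be a tree with unit length edges and let β ≥ 0 be an even integer, d = β/2. Let L(T,d) be the set of edges e of T that have an end vertex v such that every path starting at v and not containing e has length at most d−1. Then for every path P between two leaves of T, the number of edges of P in L(T,d) is at most β. -/
open Classical

noncomputable def walkLen {V : Type*} (G : SimpleGraph V) (ℓ : Sym2 V → ℝ)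
    {u v : V} (w : G.Walk u v) : ℝ := (w.edges.map ℓ).sum

noncomputable def gdist {V : Type*} (G : SimpleGraph V) (ℓ : Sym2 V → ℝ) (u v : V) : ℝ :=
  sInf {x : ℝ | ∃ w : G.Walk u v, walkLen G ℓ w = x}

noncomputable def zeroOn {V : Type*} (ℓ : Sym2 V → ℝ) (C : Set (Sym2 V)) : Sym2 V → ℝ :=
  fun e => if e ∈ C then 0 else ℓ e

namespace SimpleGraph.Walk
variable {V : Type*} {G : SimpleGraph V}

lemma edges_drop' {u v : V} (p : G.Walk u v) (n : ℕ) :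
    (p.drop n).edges = p.edges.drop n := by
  induction p generalizing n with
  | nil => simp [drop]
  | cons h q ih =>
    cases n with
    | zero => simp [drop]
    | succ n => simp [drop, ih]

lemma length_drop' {u v : V} (p : G.Walk u v) (n : ℕ) :
    (p.drop n).length = p.length - n := by
  induction p generalizing n with
  | nil => simp [drop]
  | cons h q ih =>
    cases n with
    | zero => simp [drop]
    | succ n => simp [drop, ih]

lemma isPath_drop' {u v : V} {p : G.Walk u v} (hp : p.IsPath) (n : ℕ) :
    (p.drop n).IsPath := by
  induction p generalizing n with
  | nil => cases n <;> simp [drop]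
  | cons h q ih =>
    cases n with
    | zero => simpa [drop] using hp
    | succ n =>
      simp only [drop, isPath_copy]
      exact ih hp.of_cons n

lemma edges_getElem' {u v : V} (p : G.Walk u v) (i : ℕ) (h : i < p.edges.length) :
    p.edges[i] = s(p.getVert i, p.getVert (i + 1)) := by
  induction p generalizing i with
  | nil => simp at h
  | cons ha q ih =>
    cases i with
    | zero => simp [getVert_zero, getVert_cons_succ]
    | succ i =>
      simp only [edges_cons, List.getElem_cons_succ, getVert_cons_succ]
      exact ih i (by simpa using h)

end SimpleGraph.Walk

theorem tree_unit_additive_feasible {V : Type*} [Fintype V] (G : SimpleGraph V)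
    (hT : G.IsTree) (β : ℕ) (hβ : Even β)
    (L : Set (Sym2 V))
    (hL : L = {e | e ∈ G.edgeSet ∧ ∃ v, v ∈ e ∧
      ∀ (x : V) (p : G.Walk v x), p.IsPath → e ∉ p.edges →
        (p.length : ℤ) ≤ ((β / 2 : ℕ) : ℤ) - 1}) :
    ∀ (u v : V), G.degree u = 1 → G.degree v = 1 →
      ∀ (P : G.Walk u v), P.IsPath →
        (P.edges.filter (fun e => e ∈ L)).length ≤ β := by
  intro u v _ _ P hP
  set d : ℕ := β / 2 with hd
  have hβd : β = 2 * d := by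
    obtain ⟨r, rfl⟩ := hβ; omega
  set n : ℕ := P.length with hn
  have hel : P.edges.length = n := P.length_edges
  have hnodup : P.edges.Nodup := hP.isTrail.edges_nodup
  -- key index lemma
  have key : ∀ (i : ℕ) (hi : i < P.edges.length), d ≤ i → i + d < n → P.edges[i] ∉ L := by
    intro i hi hdi hin he
    rw [hL] at he
    obtain ⟨-, v0, hv0, hall⟩ := he
    have hedge : P.edges[i] = s(P.getVert i, P.getVert (i + 1)) :=
      P.edges_getElem' i hi
    rw [hedge] at hv0
    rw [Sym2.mem_iff] at hv0
    rcases hv0 with hv0 | hv0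
    · -- v0 = P.getVert i : walk back to u along the reversed prefix
      have him : i ≤ n := by omega
      have hc : P.reverse.getVert (n - i) = v0 := by
        rw [SimpleGraph.Walk.getVert_reverse, ← hn]
        have : n - (n - i) = i := by omega
        rw [this, hv0]
      set Q : G.Walk v0 u := (P.reverse.drop (n - i)).copy hc rfl with hQ
      have hQpath : Q.IsPath := by
        rw [hQ, SimpleGraph.Walk.isPath_copy]
        exact SimpleGraph.Walk.isPath_drop' hP.reverse _
      have hQlen : Q.length = i := by
        rw [hQ]
        simp [SimpleGraph.Walk.length_drop', SimpleGraph.Walk.length_reverse, ← hn]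
        omega
      have hQedges : P.edges[i] ∉ Q.edges := by
        intro hmem
        rw [hQ] at hmem
        simp only [SimpleGraph.Walk.edges_copy, SimpleGraph.Walk.edges_drop',
          SimpleGraph.Walk.edges_reverse] at hmem
        obtain ⟨j, hj, hje⟩ := List.getElem_of_mem hmem
        rw [List.getElem_drop, List.getElem_reverse] at hje
        have heq := (hnodup.getElem_inj_iff).mp hje
        simp only [List.length_drop, List.length_reverse, hel] at hj
        simp only [List.length_reverse, hel] at heq
        omega
      have := hall u Q hQpath hQedges
      rw [hQlen] at this
      omega
    · -- v0 = P.getVert (i+1) : walk forward to v along the suffix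
      have hc : P.getVert (i + 1) = v0 := hv0.symm
      set Q : G.Walk v0 v := (P.drop (i + 1)).copy hc rfl with hQ
      have hQpath : Q.IsPath := by
        rw [hQ, SimpleGraph.Walk.isPath_copy]
        exact SimpleGraph.Walk.isPath_drop' hP _
      have hQlen : Q.length = n - (i + 1) := by
        rw [hQ]; simp [SimpleGraph.Walk.length_drop', ← hn]
      have hQedges : P.edges[i] ∉ Q.edges := by
        intro hmem
        rw [hQ] at hmem
        simp only [SimpleGraph.Walk.edges_copy, SimpleGraph.Walk.edges_drop'] at hmem
        obtain ⟨j, hj, hje⟩ := List.getElem_of_mem hmem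
        rw [List.getElem_drop] at hje
        have := (hnodup.getElem_inj_iff).mp hje
        omega
      have := hall v Q hQpath hQedges
      rw [hQlen] at this
      omega
  -- counting
  by_cases hnβ : n ≤ β
  · calc (P.edges.filter (fun e => e ∈ L)).length ≤ P.edges.length :=
          List.length_filter_le _ _
      _ ≤ β := by omega
  · push_neg at hnβ
    set l := P.edges with hle
    set q : Sym2 V → Bool := fun e => decide (e ∈ L) with hq
    have hsplit : l = l.take d ++ ((l.drop d).take (n - 2 * d) ++ (l.drop d).drop (n - 2 * d)) := by
      rw [List.take_append_drop, List.take_append_drop]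
    have hmid : ((l.drop d).take (n - 2 * d)).filter q = [] := by
      rw [List.filter_eq_nil_iff]
      intro e hmem
      obtain ⟨j, hj, rfl⟩ := List.getElem_of_mem hmem
      have hj1 : j < n - 2 * d := by
        simp only [List.length_take, List.length_drop, hel, lt_min_iff] at hj
        omega
      rw [List.getElem_take, List.getElem_drop]
      have hnot := key (d + j) (by omega) (by omega) (by omega)
      simpa [hq] using hnot
    have hdd : (l.drop d).drop (n - 2 * d) = l.drop (n - d) := by
      rw [List.drop_drop]
      congr 1
      omega
    calc (l.filter q).length
        = ((l.take d).filter q).length + (((l.drop d).take (n - 2 * d)).filter q).length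
            + (((l.drop d).drop (n - 2 * d)).filter q).length := by
          conv_lhs => rw [hsplit]
          rw [List.filter_append, List.filter_append, List.length_append, List.length_append,
            Nat.add_assoc]
      _ ≤ d + 0 + d := by
          refine Nat.add_le_add (Nat.add_le_add ?_ ?_) ?_
          · exact (List.length_filter_le _ _).trans (by simp [List.length_take])
          · simp [hmid]
          · rw [hdd]
            refine (List.length_filter_le _ _).trans ?_
            rw [List.length_drop]
            omega
      _ ≤ β := by omega
end

section
/- Let T be a tree with edge lengths ℓ, partitioned into two subtrees T₁ and T₂ sharing exactly one vertex v. For C ⊆ E(T), α ≥ 1, and β ≥ 0, define load_{C,α}(u,w) = dist_ℓ(u,w)/α − dist_{ℓ_C}(u,w) and load_{C,α}(T_i, v) = max over u ∈ V(T_i) of load_{C,α}(u,v). Then C satisfies load_{C,α}(u,w) ≤ β for all u,w ∈ V(T) if and only if: C ∩ E(T₁) satisfies this condition within T₁, C ∩ E(T₂) satisfies it within T₂, and load_{C,α}(T₁,v) + load_{C,α}(T₂,v) ≤ β. -/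
open Classical

/-!
In a tree, for any nonnegative edge lengths, the distance between two vertices is the length of
the unique path joining them. Hence distances between two vertices of a connected piece `Tᵢ` only
see the edges of `Tᵢ`, so the loads inside `Tᵢ` are the loads for `C ∩ E(Tᵢ)`; and the path from
`u ∈ T₁` to `w ∈ T₂` runs through the cut vertex `v`, so `load(u, w) = load(u, v) + load(w, v)`.
A bound on all these cross sums is a bound on the sum of the two maxima.
-/

theorem csSup_add_csSup_le_iff {M : Type*} [ConditionallyCompleteLattice M] [AddGroup M]
    [AddLeftMono M] [AddRightMono M] {S T : Set M} {c : M} (hS : S.Nonempty)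
    (hS' : BddAbove S) (hT : T.Nonempty) (hT' : BddAbove T) :
    sSup S + sSup T ≤ c ↔ ∀ a ∈ S, ∀ b ∈ T, a + b ≤ c := by
  rw [← csSup_add hS hS' hT hT', csSup_le_iff (hS'.add hT') (hS.add hT)]
  exact Set.forall_mem_image2

theorem forall_le_iff_of_eq_add_of_cut {V : Type*} (L : V → V → ℝ) (β : ℝ) (V₁ V₂ : Set V)
    (v : V) (hcover : ∀ u, u ∈ V₁ ∨ u ∈ V₂) (hv₁ : v ∈ V₁) (hv₂ : v ∈ V₂)
    (hcomm : ∀ u w, L u w = L w u) (hsplit : ∀ u ∈ V₁, ∀ w ∈ V₂, L u w = L u v + L w v) :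
    (∀ u w, L u w ≤ β) ↔
      ((∀ u ∈ V₁, ∀ w ∈ V₁, L u w ≤ β) ∧ (∀ u ∈ V₂, ∀ w ∈ V₂, L u w ≤ β) ∧
        sSup {x | ∃ u ∈ V₁, x = L u v} + sSup {x | ∃ u ∈ V₂, x = L u v} ≤ β) := by
  have hsup {s : Set V} (hv : v ∈ s) (hs : ∀ u ∈ s, ∀ w ∈ s, L u w ≤ β) :
      {x | ∃ u ∈ s, x = L u v}.Nonempty ∧ BddAbove {x | ∃ u ∈ s, x = L u v} :=
    ⟨⟨_, v, hv, rfl⟩, β, by rintro _ ⟨u, hu, rfl⟩; exact hs u hu v hv⟩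
  have hcross (h₁ : ∀ u ∈ V₁, ∀ w ∈ V₁, L u w ≤ β) (h₂ : ∀ u ∈ V₂, ∀ w ∈ V₂, L u w ≤ β) :
      sSup {x | ∃ u ∈ V₁, x = L u v} + sSup {x | ∃ u ∈ V₂, x = L u v} ≤ β ↔
        ∀ u ∈ V₁, ∀ w ∈ V₂, L u w ≤ β := by
    obtain ⟨hS, hS'⟩ := hsup hv₁ h₁
    obtain ⟨hT, hT'⟩ := hsup hv₂ h₂
    rw [csSup_add_csSup_le_iff hS hS' hT hT']
    constructor
    · intro h u hu w hw
      exact hsplit u hu w hw ▸ h _ ⟨u, hu, rfl⟩ _ ⟨w, hw, rfl⟩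
    · rintro h _ ⟨u, hu, rfl⟩ _ ⟨w, hw, rfl⟩
      exact hsplit u hu w hw ▸ h u hu w hw
  constructor
  · intro h
    have h₁ : ∀ u ∈ V₁, ∀ w ∈ V₁, L u w ≤ β := fun u _ w _ => h u w
    have h₂ : ∀ u ∈ V₂, ∀ w ∈ V₂, L u w ≤ β := fun u _ w _ => h u w
    exact ⟨h₁, h₂, (hcross h₁ h₂).2 fun u _ w _ => h u w⟩
  · rintro ⟨h₁, h₂, h₁₂⟩ u w
    have h₁₂ := (hcross h₁ h₂).1 h₁₂
    rcases hcover u with hu | hu <;> rcases hcover w with hw | hw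
    · exact h₁ u hu w hw
    · exact h₁₂ u hu w hw
    · exact hcomm u w ▸ h₁₂ w hw u hu
    · exact h₂ u hu w hw

namespace SimpleGraph

variable {V : Type*} {G : SimpleGraph V} {ℓ : Sym2 V → ℝ}

theorem walkLen_append {u v w : V} (p : G.Walk u v) (q : G.Walk v w) :
    walkLen G ℓ (p.append q) = walkLen G ℓ p + walkLen G ℓ q := by
  simp [walkLen, Walk.edges_append]

theorem walkLen_reverse {u v : V} (p : G.Walk u v) : walkLen G ℓ p.reverse = walkLen G ℓ p := by
  simp [walkLen, Walk.edges_reverse, List.map_reverse, List.sum_reverse]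

theorem walkLen_congr {ℓ' : Sym2 V → ℝ} {u v : V} (p : G.Walk u v)
    (h : ∀ e ∈ p.edges, ℓ e = ℓ' e) : walkLen G ℓ p = walkLen G ℓ' p :=
  congrArg List.sum (List.map_congr_left h)

theorem walkLen_nonneg (hℓ : ∀ e ∈ G.edgeSet, 0 ≤ ℓ e) {u v : V} (p : G.Walk u v) :
    0 ≤ walkLen G ℓ p :=
  List.sum_nonneg <| List.forall_mem_map.2 fun e he => hℓ e (p.edges_subset_edgeSet he)

theorem walkLen_le_of_subperm (hℓ : ∀ e ∈ G.edgeSet, 0 ≤ ℓ e) {u v u' v' : V}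
    {p : G.Walk u v} {q : G.Walk u' v'} (h : p.edges.Subperm q.edges) :
    walkLen G ℓ p ≤ walkLen G ℓ q := by
  obtain ⟨l, hperm, hsub⟩ := h
  rw [walkLen, ← (hperm.map ℓ).sum_eq]
  exact (hsub.map ℓ).sum_le_sum <|
    List.forall_mem_map.2 fun e he => hℓ e (q.edges_subset_edgeSet he)

theorem gdist_comm (ℓ : Sym2 V → ℝ) (u v : V) : gdist G ℓ u v = gdist G ℓ v u := by
  have key {a b : V} (p : G.Walk a b) : ∃ q : G.Walk b a, walkLen G ℓ q = walkLen G ℓ p :=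
    ⟨p.reverse, walkLen_reverse p⟩
  unfold gdist
  congr 1
  ext x
  constructor <;> rintro ⟨p, rfl⟩ <;> exact key p

/-- In an acyclic graph the bypass of any walk is the unique path, which is no longer. -/
theorem IsAcyclic.gdist_eq_walkLen (hG : G.IsAcyclic) (hℓ : ∀ e ∈ G.edgeSet, 0 ≤ ℓ e)
    {u v : V} {p : G.Walk u v} (hp : p.IsPath) : gdist G ℓ u v = walkLen G ℓ p := by
  refine le_antisymm (csInf_le ⟨0, ?_⟩ ⟨p, rfl⟩) (le_csInf ⟨_, p, rfl⟩ ?_)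
  · rintro _ ⟨q, rfl⟩
    exact walkLen_nonneg hℓ q
  · rintro _ ⟨q, rfl⟩
    have hq : q.bypass = p := congrArg Subtype.val <|
      (hG.subsingleton_path u v).elim ⟨_, q.bypass_isPath⟩ ⟨p, hp⟩
    exact hq ▸ walkLen_le_of_subperm hℓ
      (q.bypass_isPath.isTrail.edges_nodup.subperm q.edges_bypass_subset_edges)

theorem zeroOn_nonneg (hℓ : ∀ e ∈ G.edgeSet, 0 ≤ ℓ e) (C : Set (Sym2 V)) :
    ∀ e ∈ G.edgeSet, 0 ≤ zeroOn ℓ C e := by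
  intro e he
  unfold zeroOn
  split_ifs
  exacts [le_rfl, hℓ e he]

theorem zeroOn_inter_of_mem {C D : Set (Sym2 V)} {e : Sym2 V} (he : e ∈ D) :
    zeroOn ℓ (C ∩ D) e = zeroOn ℓ C e := by
  simp [zeroOn, he]

theorem Connected.exists_isPath_support_subset {s : Set V} (hs : (G.induce s).Connected)
    {u v : V} (hu : u ∈ s) (hv : v ∈ s) :
    ∃ p : G.Walk u v, p.IsPath ∧ ∀ x ∈ p.support, x ∈ s := by
  obtain ⟨q⟩ := hs.preconnected ⟨u, hu⟩ ⟨v, hv⟩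
  let p := q.map (Embedding.induce s).toHom
  refine ⟨p.bypass, p.bypass_isPath, fun x hx => ?_⟩
  obtain ⟨y, -, rfl⟩ :=
    List.mem_map.1 (Walk.support_map _ q ▸ p.support_bypass_subset_support hx)
  exact y.2

theorem Walk.IsPath.append {u v w : V} {p : G.Walk u v} {q : G.Walk v w} (hp : p.IsPath)
    (hq : q.IsPath) (hpq : ∀ x ∈ p.support, x ∈ q.support → x = v) : (p.append q).IsPath := by
  rw [Walk.isPath_def, Walk.support_append, List.nodup_append]
  refine ⟨hp.support_nodup, hq.support_nodup.tail, fun x hx y hy hxy => ?_⟩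
  subst hxy
  obtain rfl := hpq x hx (List.mem_of_mem_tail hy)
  have hnodup := hq.support_nodup
  rw [← q.cons_tail_support] at hnodup
  exact (List.nodup_cons.1 hnodup).1 hy

theorem IsAcyclic.gdist_zeroOn_inter (hG : G.IsAcyclic) (hℓ : ∀ e ∈ G.edgeSet, 0 ≤ ℓ e)
    (C : Set (Sym2 V)) {s : Set V} (hs : (G.induce s).Connected) {u w : V} (hu : u ∈ s)
    (hw : w ∈ s) :
    gdist G (zeroOn ℓ (C ∩ {e | ∀ x ∈ e, x ∈ s})) u w = gdist G (zeroOn ℓ C) u w := by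
  obtain ⟨p, hp, hps⟩ := hs.exists_isPath_support_subset hu hw
  rw [hG.gdist_eq_walkLen (zeroOn_nonneg hℓ _) hp, hG.gdist_eq_walkLen (zeroOn_nonneg hℓ C) hp]
  exact walkLen_congr p fun e he =>
    zeroOn_inter_of_mem fun x hx => hps x (p.mem_support_of_mem_edges he hx)

theorem IsAcyclic.gdist_eq_add_of_cut (hG : G.IsAcyclic) (hℓ : ∀ e ∈ G.edgeSet, 0 ≤ ℓ e)
    {V₁ V₂ : Set V} {v : V} (hinter : V₁ ∩ V₂ = {v}) (hconn₁ : (G.induce V₁).Connected)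
    (hconn₂ : (G.induce V₂).Connected) {u w : V} (hu : u ∈ V₁) (hw : w ∈ V₂) :
    gdist G ℓ u w = gdist G ℓ u v + gdist G ℓ v w := by
  have hv : v ∈ V₁ ∩ V₂ := hinter ▸ rfl
  obtain ⟨p, hp, hp₁⟩ := hconn₁.exists_isPath_support_subset hu hv.1
  obtain ⟨q, hq, hq₂⟩ := hconn₂.exists_isPath_support_subset hv.2 hw
  have hpq : (p.append q).IsPath :=
    hp.append hq fun x hxp hxq => hinter.subset ⟨hp₁ x hxp, hq₂ x hxq⟩
  rw [hG.gdist_eq_walkLen hℓ hpq, hG.gdist_eq_walkLen hℓ hp, hG.gdist_eq_walkLen hℓ hq,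
    walkLen_append]

noncomputable def load (G : SimpleGraph V) (ℓ : Sym2 V → ℝ) (α : ℝ) (C : Set (Sym2 V))
    (u w : V) : ℝ :=
  gdist G ℓ u w / α - gdist G (zeroOn ℓ C) u w

theorem load_comm (α : ℝ) (C : Set (Sym2 V)) (u w : V) :
    G.load ℓ α C u w = G.load ℓ α C w u := by
  rw [load, load, gdist_comm ℓ u w, gdist_comm (zeroOn ℓ C) u w]

theorem IsAcyclic.load_zeroOn_inter (hG : G.IsAcyclic) (hℓ : ∀ e ∈ G.edgeSet, 0 ≤ ℓ e)
    (α : ℝ) (C : Set (Sym2 V)) {s : Set V} (hs : (G.induce s).Connected) {u w : V} (hu : u ∈ s)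
    (hw : w ∈ s) : G.load ℓ α (C ∩ {e | ∀ x ∈ e, x ∈ s}) u w = G.load ℓ α C u w := by
  rw [load, load, hG.gdist_zeroOn_inter hℓ C hs hu hw]

theorem IsAcyclic.load_eq_add_of_cut (hG : G.IsAcyclic) (hℓ : ∀ e ∈ G.edgeSet, 0 ≤ ℓ e)
    (α : ℝ) (C : Set (Sym2 V)) {V₁ V₂ : Set V} {v : V} (hinter : V₁ ∩ V₂ = {v})
    (hconn₁ : (G.induce V₁).Connected) (hconn₂ : (G.induce V₂).Connected) {u w : V}
    (hu : u ∈ V₁) (hw : w ∈ V₂) : G.load ℓ α C u w = G.load ℓ α C u v + G.load ℓ α C w v := by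
  rw [load_comm α C w v, load, load, load,
    hG.gdist_eq_add_of_cut hℓ hinter hconn₁ hconn₂ hu hw,
    hG.gdist_eq_add_of_cut (zeroOn_nonneg hℓ C) hinter hconn₁ hconn₂ hu hw, add_div]
  ring

end SimpleGraph

theorem tree_load_partition_general {V : Type*} (G : SimpleGraph V) (hT : G.IsTree)
    (ℓ : Sym2 V → ℝ) (hℓ : ∀ e ∈ G.edgeSet, 0 < ℓ e)
    (α β : ℝ)
    (V₁ V₂ : Set V) (v : V) (hunion : V₁ ∪ V₂ = Set.univ) (hinter : V₁ ∩ V₂ = {v})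
    (hconn₁ : (G.induce V₁).Connected) (hconn₂ : (G.induce V₂).Connected)
    (C : Set (Sym2 V)) :
    (∀ u w : V, gdist G ℓ u w / α - gdist G (zeroOn ℓ C) u w ≤ β) ↔
    ((∀ u ∈ V₁, ∀ w ∈ V₁,
        gdist G ℓ u w / α - gdist G (zeroOn ℓ (C ∩ {e | ∀ x ∈ e, x ∈ V₁})) u w ≤ β) ∧
     (∀ u ∈ V₂, ∀ w ∈ V₂,
        gdist G ℓ u w / α - gdist G (zeroOn ℓ (C ∩ {e | ∀ x ∈ e, x ∈ V₂})) u w ≤ β) ∧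
     sSup {x : ℝ | ∃ u ∈ V₁, x = gdist G ℓ u v / α - gdist G (zeroOn ℓ C) u v} +
       sSup {x : ℝ | ∃ u ∈ V₂, x = gdist G ℓ u v / α - gdist G (zeroOn ℓ C) u v} ≤ β) := by
  have hG := hT.isAcyclic
  have hℓ₀ : ∀ e ∈ G.edgeSet, 0 ≤ ℓ e := fun e he => (hℓ e he).le
  have hv : v ∈ V₁ ∩ V₂ := hinter ▸ rfl
  have hrestrict {s : Set V} (hs : (G.induce s).Connected) :
      (∀ u ∈ s, ∀ w ∈ s, G.load ℓ α C u w ≤ β) ↔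
        ∀ u ∈ s, ∀ w ∈ s, G.load ℓ α (C ∩ {e | ∀ x ∈ e, x ∈ s}) u w ≤ β :=
    forall₂_congr fun u hu => forall₂_congr fun w hw => by
      rw [hG.load_zeroOn_inter hℓ₀ α C hs hu hw]
  exact (forall_le_iff_of_eq_add_of_cut (G.load ℓ α C) β V₁ V₂ v
    (fun u => Set.eq_univ_iff_forall.1 hunion u) hv.1 hv.2 (SimpleGraph.load_comm α C)
    (fun u hu w hw => hG.load_eq_add_of_cut hℓ₀ α C hinter hconn₁ hconn₂ hu hw)).trans
    (and_congr (hrestrict hconn₁) (and_congr (hrestrict hconn₂) Iff.rfl))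

theorem tree_load_partition {V : Type*} [Fintype V] (G : SimpleGraph V) (hT : G.IsTree)
    (ℓ : Sym2 V → ℝ) (hℓ : ∀ e ∈ G.edgeSet, 0 < ℓ e)
    (α β : ℝ) (hα : 1 ≤ α) (hβ : 0 ≤ β)
    (V₁ V₂ : Set V) (v : V) (hunion : V₁ ∪ V₂ = Set.univ) (hinter : V₁ ∩ V₂ = {v})
    (hconn₁ : (G.induce V₁).Connected) (hconn₂ : (G.induce V₂).Connected)
    (C : Set (Sym2 V)) (hC : C ⊆ G.edgeSet) :
    (∀ u w : V, gdist G ℓ u w / α - gdist G (zeroOn ℓ C) u w ≤ β) ↔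
    ((∀ u ∈ V₁, ∀ w ∈ V₁,
        gdist G ℓ u w / α - gdist G (zeroOn ℓ (C ∩ {e | ∀ x ∈ e, x ∈ V₁})) u w ≤ β) ∧
     (∀ u ∈ V₂, ∀ w ∈ V₂,
        gdist G ℓ u w / α - gdist G (zeroOn ℓ (C ∩ {e | ∀ x ∈ e, x ∈ V₂})) u w ≤ β) ∧
     sSup {x : ℝ | ∃ u ∈ V₁, x = gdist G ℓ u v / α - gdist G (zeroOn ℓ C) u v} +
       sSup {x : ℝ | ∃ u ∈ V₂, x = gdist G ℓ u v / α - gdist G (zeroOn ℓ C) u v} ≤ β) :=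
  tree_load_partition_general G hT ℓ hℓ α β V₁ V₂ v hunion hinter hconn₁ hconn₂ C
end

section
/- Let G be a bipartite graph with unit edge lengths and let e = {u₁,u₂} and f = {v₁,v₂} be two distinct non-incident edges. Then C = {e,f} is a (1,1)-contraction if and only if dist(u₁,v₁) = dist(u₂,v₂) and dist(u₁,v₂) = dist(u₂,v₁). -/
open Classical

namespace ContractAux

variable {V : Type*}

/-- number of edges in the list not belonging to `C` -/
noncomputable def cCount (C : Set (Sym2 V)) (l : List (Sym2 V)) : ℕ :=
  (l.map (fun e => if e ∈ C then 0 else 1)).sum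

@[simp] lemma cCount_nil (C : Set (Sym2 V)) : cCount C ([] : List (Sym2 V)) = 0 := rfl

@[simp] lemma cCount_cons (C : Set (Sym2 V)) (a : Sym2 V) (l : List (Sym2 V)) :
    cCount C (a :: l) = (if a ∈ C then 0 else 1) + cCount C l := by
  simp [cCount]

@[simp] lemma cCount_append (C : Set (Sym2 V)) (l₁ l₂ : List (Sym2 V)) :
    cCount C (l₁ ++ l₂) = cCount C l₁ + cCount C l₂ := by
  simp [cCount]

lemma cCount_le_length (C : Set (Sym2 V)) (l : List (Sym2 V)) : cCount C l ≤ l.length := by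
  induction l with
  | nil => simp
  | cons a l ih =>
    simp only [cCount_cons, List.length_cons]
    split <;> omega

lemma cCount_eq_length (C : Set (Sym2 V)) (l : List (Sym2 V)) (h : ∀ e ∈ l, e ∉ C) :
    cCount C l = l.length := by
  induction l with
  | nil => simp
  | cons a l ih =>
    have ha : a ∉ C := h a (by simp)
    simp only [cCount_cons, List.length_cons, if_neg ha, ih (fun e he => h e (by simp [he]))]
    omega

lemma walkLen_one (G : SimpleGraph V) {u v : V} (w : G.Walk u v) :
    walkLen G (fun _ => (1 : ℝ)) w = (w.length : ℝ) := by
  rw [walkLen]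
  rw [← SimpleGraph.Walk.length_edges]
  induction w.edges with
  | nil => simp
  | cons a l ih => simp [ih]; ring

lemma walkLen_zeroOn (G : SimpleGraph V) (C : Set (Sym2 V)) {u v : V} (w : G.Walk u v) :
    walkLen G (zeroOn (fun _ => (1 : ℝ)) C) w = (cCount C w.edges : ℝ) := by
  rw [walkLen]
  induction w.edges with
  | nil => simp
  | cons a l ih =>
    simp only [List.map_cons, List.sum_cons, ih, cCount_cons, zeroOn]
    push_cast
    split <;> simp

lemma natcast_sInf (T : Set ℕ) (hT : T.Nonempty) :
    sInf ((fun n : ℕ => (n : ℝ)) '' T) = (Nat.cast (sInf T) : ℝ) := by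
  apply le_antisymm
  · exact csInf_le ⟨0, by rintro x ⟨n, _, rfl⟩; positivity⟩ ⟨sInf T, Nat.sInf_mem hT, rfl⟩
  · refine le_csInf (hT.image _) ?_
    rintro x ⟨n, hn, rfl⟩
    simpa using (Nat.cast_le.mpr (Nat.sInf_le hn) : ((sInf T : ℕ) : ℝ) ≤ (n : ℝ))

lemma gdist_eq_natcast (G : SimpleGraph V) (ℓ : Sym2 V → ℝ) (u v : V)
    (F : G.Walk u v → ℕ) (hF : ∀ w, walkLen G ℓ w = (F w : ℝ))
    (hne : Nonempty (G.Walk u v)) :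
    gdist G ℓ u v = (Nat.cast (sInf {n : ℕ | ∃ w : G.Walk u v, F w = n}) : ℝ) := by
  rw [gdist]
  have hset : {x : ℝ | ∃ w : G.Walk u v, walkLen G ℓ w = x}
      = (fun n : ℕ => (n : ℝ)) '' {n : ℕ | ∃ w : G.Walk u v, F w = n} := by
    ext x
    constructor
    · rintro ⟨w, rfl⟩; exact ⟨F w, ⟨w, rfl⟩, (hF w).symm⟩
    · rintro ⟨n, ⟨w, rfl⟩, rfl⟩; exact ⟨w, hF w⟩
  rw [hset, natcast_sInf]
  obtain ⟨w⟩ := hne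
  exact ⟨F w, w, rfl⟩


open SimpleGraph in
lemma decomp (C : Set (Sym2 V)) {G : SimpleGraph V} {a b : V} (w : G.Walk a b) :
    (∀ e ∈ w.edges, e ∉ C) ∨
    ∃ (x y : V) (w₁ : G.Walk a x) (_ : G.Adj x y) (w₂ : G.Walk y b),
      w.edges = w₁.edges ++ s(x, y) :: w₂.edges ∧ s(x, y) ∈ C ∧ ∀ e ∈ w₁.edges, e ∉ C := by
  induction w with
  | nil => left; simp
  | @cons c c' d h p ih =>
    by_cases hc : s(c, c') ∈ C
    · right
      exact ⟨_, _, Walk.nil, h, p, by simp, hc, by simp⟩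
    · rcases ih with h1 | ⟨x, y, w₁, hxy, w₂, hE, hCm, hfree⟩
      · left
        intro e he
        rw [Walk.edges_cons] at he
        rcases List.mem_cons.mp he with rfl | he
        · exact hc
        · exact h1 e he
      · right
        refine ⟨x, y, Walk.cons h w₁, hxy, w₂, ?_, hCm, ?_⟩
        · rw [Walk.edges_cons, hE]; simp
        · intro e he
          rw [Walk.edges_cons] at he
          rcases List.mem_cons.mp he with rfl | he
          · exact hc
          · exact hfree e he

lemma walk_parity {G : SimpleGraph V} (Gc : G.Coloring (Fin 2)) {a b : V} (w : G.Walk a b) :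
    Even w.length ↔ Gc a = Gc b := by
  induction w with
  | nil => simp
  | cons h p ih =>
    have hne := Gc.valid h
    have key : ∀ x y z : Fin 2, x ≠ y → (¬(y = z) ↔ x = z) := by decide
    rw [SimpleGraph.Walk.length_cons, Nat.even_add_one, ih]
    exact key _ _ _ hne

lemma dist_parity {G : SimpleGraph V} (hconn : G.Connected) (Gc : G.Coloring (Fin 2))
    (a b : V) : Even (G.dist a b) ↔ Gc a = Gc b := by
  obtain ⟨w, hw⟩ := hconn.exists_walk_length_eq_dist a b
  rw [← hw]
  exact walk_parity Gc w

lemma dist_parity_pair {G : SimpleGraph V} (hconn : G.Connected) (hbip : G.Colorable 2)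
    {a a' b b' : V} (ha : G.Adj a a') (hb : G.Adj b b') :
    (Even (G.dist a b) ↔ Even (G.dist a' b')) := by
  obtain ⟨Gc⟩ := hbip
  rw [dist_parity hconn Gc, dist_parity hconn Gc]
  have key : ∀ x x' y y' : Fin 2, x ≠ x' → y ≠ y' → ((x = y) ↔ (x' = y')) := by decide
  exact key _ _ _ _ (Gc.valid ha) (Gc.valid hb)

lemma eq_of_parity {m n : ℕ} (hp : Even m ↔ Even n) (h1 : m ≤ n + 1) (h2 : n ≤ m + 1) :
    m = n := by
  have hmn : m % 2 = n % 2 := by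
    rcases Nat.even_or_odd m with hm | hm
    · have hn := hp.mp hm
      rw [Nat.even_iff] at hm hn
      omega
    · have hm' := Nat.odd_iff.mp hm
      have hn : n % 2 = 1 := by
        by_contra hcon
        have : Even n := Nat.even_iff.mpr (by omega)
        have := hp.mpr this
        rw [Nat.even_iff] at this
        omega
      omega
  omega

end ContractAux

theorem bipartite_pair_contraction {V : Type*} [Fintype V] (G : SimpleGraph V)
    (hconn : G.Connected) (hbip : G.Colorable 2)
    (u₁ u₂ v₁ v₂ : V) (he : G.Adj u₁ u₂) (hf : G.Adj v₁ v₂)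
    (hnoninc : ∀ x : V, ¬(x ∈ (s(u₁, u₂) : Sym2 V) ∧ x ∈ (s(v₁, v₂) : Sym2 V))) :
    (∀ u v : V, gdist G (fun _ => (1 : ℝ)) u v - 1 ≤
        gdist G (zeroOn (fun _ => (1 : ℝ)) ({s(u₁, u₂), s(v₁, v₂)} : Set (Sym2 V))) u v) ↔
    (gdist G (fun _ => (1 : ℝ)) u₁ v₁ = gdist G (fun _ => (1 : ℝ)) u₂ v₂ ∧
     gdist G (fun _ => (1 : ℝ)) u₁ v₂ = gdist G (fun _ => (1 : ℝ)) u₂ v₁) := by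
  classical
  set C : Set (Sym2 V) := {s(u₁, u₂), s(v₁, v₂)} with hCdef
  have hne : ∀ a b : V, Nonempty (G.Walk a b) := fun a b => hconn.preconnected a b
  have hmem : ∀ x y : V, s(x, y) ∈ C ↔
      ((x = u₁ ∧ y = u₂ ∨ x = u₂ ∧ y = u₁) ∨ (x = v₁ ∧ y = v₂ ∨ x = v₂ ∧ y = v₁)) := by
    intro x y
    simp [hCdef, Sym2.eq_iff]
  have hd1 : ∀ a b : V, gdist G (fun _ => (1 : ℝ)) a b = (G.dist a b : ℝ) := by
    intro a b
    rw [ContractAux.gdist_eq_natcast G _ a b (fun w => w.length)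
      (fun w => ContractAux.walkLen_one G w) (hne a b)]
    congr 1
    apply le_antisymm
    · obtain ⟨w, hw⟩ := hconn.exists_walk_length_eq_dist a b
      exact Nat.sInf_le ⟨w, hw⟩
    · obtain ⟨w, hw⟩ := Nat.sInf_mem
        (⟨(hne a b).some.length, (hne a b).some, rfl⟩ :
          {n : ℕ | ∃ w : G.Walk a b, w.length = n}.Nonempty)
      rw [← hw]
      exact SimpleGraph.dist_le w
  set nD : V → V → ℕ :=
    fun a b => sInf {n : ℕ | ∃ w : G.Walk a b, ContractAux.cCount C w.edges = n} with hnDdef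
  have hdC : ∀ a b : V, gdist G (zeroOn (fun _ => (1 : ℝ)) C) a b = (nD a b : ℝ) := by
    intro a b
    exact ContractAux.gdist_eq_natcast G _ a b (fun w => ContractAux.cCount C w.edges)
      (fun w => ContractAux.walkLen_zeroOn G C w) (hne a b)
  have hnD_le : ∀ (a b : V) (w : G.Walk a b), nD a b ≤ ContractAux.cCount C w.edges :=
    fun a b w => Nat.sInf_le ⟨w, rfl⟩
  have hnD_mem : ∀ a b : V, ∃ w : G.Walk a b, ContractAux.cCount C w.edges = nD a b :=
    fun a b => Nat.sInf_mem
      (⟨ContractAux.cCount C ((hne a b).some).edges, (hne a b).some, rfl⟩ :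
        {n : ℕ | ∃ w : G.Walk a b, ContractAux.cCount C w.edges = n}.Nonempty)
  have hcast : ∀ a b : V,
      (gdist G (fun _ => (1 : ℝ)) a b - 1 ≤ gdist G (zeroOn (fun _ => (1 : ℝ)) C) a b) ↔
      G.dist a b ≤ nD a b + 1 := by
    intro a b
    rw [hd1, hdC]
    constructor
    · intro h
      exact_mod_cast (by linarith : (G.dist a b : ℝ) ≤ (nD a b : ℝ) + 1)
    · intro h
      have : (G.dist a b : ℝ) ≤ (nD a b : ℝ) + 1 := by exact_mod_cast h
      linarith
  have hpar1 : Even (G.dist u₁ v₁) ↔ Even (G.dist u₂ v₂) :=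
    ContractAux.dist_parity_pair hconn hbip he hf
  have hpar2 : Even (G.dist u₁ v₂) ↔ Even (G.dist u₂ v₁) :=
    ContractAux.dist_parity_pair hconn hbip he hf.symm
  have cross : ∀ a a' b b' : V, G.Adj a' a → G.Adj b b' → s(a', a) ∈ C → s(b, b') ∈ C →
      nD a' b' ≤ G.dist a b := by
    intro a a' b b' ha hb hCa hCb
    obtain ⟨p, hp⟩ := hconn.exists_walk_length_eq_dist a b
    have hW := hnD_le a' b' (SimpleGraph.Walk.cons ha (p.append (SimpleGraph.Walk.cons hb SimpleGraph.Walk.nil)))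
    rw [SimpleGraph.Walk.edges_cons, SimpleGraph.Walk.edges_append, SimpleGraph.Walk.edges_cons,
      SimpleGraph.Walk.edges_nil, ContractAux.cCount_cons, ContractAux.cCount_append,
      ContractAux.cCount_cons, ContractAux.cCount_nil, if_pos hCa, if_pos hCb] at hW
    have hc := ContractAux.cCount_le_length C p.edges
    rw [SimpleGraph.Walk.length_edges, hp] at hc
    omega
  rw [hd1, hd1, hd1, hd1]
  constructor
  · intro h
    have h11 : G.dist u₂ v₂ ≤ nD u₂ v₂ + 1 := (hcast u₂ v₂).mp (h u₂ v₂)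
    have h12 : nD u₂ v₂ ≤ G.dist u₁ v₁ := cross u₁ u₂ v₁ v₂ he.symm hf
      ((hmem u₂ u₁).mpr (Or.inl (Or.inr ⟨rfl, rfl⟩)))
      ((hmem v₁ v₂).mpr (Or.inr (Or.inl ⟨rfl, rfl⟩)))
    have h21 : G.dist u₁ v₁ ≤ nD u₁ v₁ + 1 := (hcast u₁ v₁).mp (h u₁ v₁)
    have h22 : nD u₁ v₁ ≤ G.dist u₂ v₂ := cross u₂ u₁ v₂ v₁ he hf.symm
      ((hmem u₁ u₂).mpr (Or.inl (Or.inl ⟨rfl, rfl⟩)))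
      ((hmem v₂ v₁).mpr (Or.inr (Or.inr ⟨rfl, rfl⟩)))
    have h31 : G.dist u₂ v₁ ≤ nD u₂ v₁ + 1 := (hcast u₂ v₁).mp (h u₂ v₁)
    have h32 : nD u₂ v₁ ≤ G.dist u₁ v₂ := cross u₁ u₂ v₂ v₁ he.symm hf.symm
      ((hmem u₂ u₁).mpr (Or.inl (Or.inr ⟨rfl, rfl⟩)))
      ((hmem v₂ v₁).mpr (Or.inr (Or.inr ⟨rfl, rfl⟩)))
    have h41 : G.dist u₁ v₂ ≤ nD u₁ v₂ + 1 := (hcast u₁ v₂).mp (h u₁ v₂)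
    have h42 : nD u₁ v₂ ≤ G.dist u₂ v₁ := cross u₂ u₁ v₁ v₂ he hf
      ((hmem u₁ u₂).mpr (Or.inl (Or.inl ⟨rfl, rfl⟩)))
      ((hmem v₁ v₂).mpr (Or.inr (Or.inl ⟨rfl, rfl⟩)))
    constructor
    · exact_mod_cast ContractAux.eq_of_parity hpar1 (by omega) (by omega)
    · exact_mod_cast ContractAux.eq_of_parity hpar2 (by omega) (by omega)
  · rintro ⟨hk', hm'⟩
    have hk : G.dist u₁ v₁ = G.dist u₂ v₂ := by exact_mod_cast hk'
    have hm : G.dist u₁ v₂ = G.dist u₂ v₁ := by exact_mod_cast hm'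
    have comm : ∀ a b : V, G.dist a b = G.dist b a := fun a b => SimpleGraph.dist_comm
    have hk2 : G.dist v₁ u₁ = G.dist v₂ u₂ := by rw [comm v₁ u₁, comm v₂ u₂]; exact hk
    have hm2 : G.dist v₁ u₂ = G.dist v₂ u₁ := by rw [comm v₁ u₂, comm v₂ u₁]; exact hm.symm
    have key : ∀ x y x₂ y₂ : V, s(x, y) ∈ C → s(x₂, y₂) ∈ C →
        G.dist x y₂ = G.dist y x₂ := by
      intro x y x₂ y₂ h1 h2
      rw [hmem] at h1 h2
      rcases h1 with (⟨rfl, rfl⟩ | ⟨rfl, rfl⟩) | (⟨rfl, rfl⟩ | ⟨rfl, rfl⟩) <;>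
        rcases h2 with (⟨rfl, rfl⟩ | ⟨rfl, rfl⟩) | (⟨rfl, rfl⟩ | ⟨rfl, rfl⟩) <;>
        first
          | exact hk | exact hk.symm | exact hm | exact hm.symm
          | exact hk2 | exact hk2.symm | exact hm2 | exact hm2.symm
          | exact comm _ _
          | simp [SimpleGraph.dist_self]
    have main : ∀ n : ℕ,
        (∀ (a b : V) (w : G.Walk a b), w.length = n →
          G.dist a b ≤ ContractAux.cCount C w.edges + 1) ∧
        (∀ (x y b : V), G.Adj x y → s(x, y) ∈ C → ∀ w : G.Walk y b, w.length = n →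
          G.dist x b ≤ ContractAux.cCount C w.edges + 1) := by
      intro n
      induction n using Nat.strong_induction_on with
      | _ n ih =>
      constructor
      · intro a b w hw
        rcases ContractAux.decomp C w with hfree | ⟨x, y, w₁, hxy, w₂, hE, hCxy, hfree⟩
        · have h1 := ContractAux.cCount_eq_length C w.edges hfree
          have h2 := SimpleGraph.dist_le w
          have h3 := SimpleGraph.Walk.length_edges w
          omega
        · have hlen : w.length = w₁.length + 1 + w₂.length := by
            have hq := congrArg List.length hE
            simp only [List.length_append, List.length_cons,
              SimpleGraph.Walk.length_edges] at hq
            omega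
          subst hw
          have h2 : G.dist x b ≤ ContractAux.cCount C w₂.edges + 1 :=
            (ih w₂.length (by omega)).2 x y b hxy hCxy w₂ rfl
          have h1 : G.dist a x ≤ w₁.length := SimpleGraph.dist_le w₁
          have htri : G.dist a b ≤ G.dist a x + G.dist x b := hconn.dist_triangle
          have hcount : ContractAux.cCount C w.edges =
              w₁.length + ContractAux.cCount C w₂.edges := by
            rw [hE, ContractAux.cCount_append, ContractAux.cCount_cons, if_pos hCxy,
              ContractAux.cCount_eq_length C w₁.edges hfree, SimpleGraph.Walk.length_edges]
            omega
          omega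
      · intro x y b hxy hCxy w hw
        rcases ContractAux.decomp C w with hfree | ⟨x₂, y₂, w₁, hxy₂, w₂, hE, hC₂, hfree⟩
        · have h1 : G.dist x b ≤ G.dist x y + G.dist y b := hconn.dist_triangle
          have h2 : G.dist x y ≤ 1 := by
            simpa using SimpleGraph.dist_le (SimpleGraph.Walk.cons hxy SimpleGraph.Walk.nil)
          have h3 : G.dist y b ≤ w.length := SimpleGraph.dist_le w
          have h4 := ContractAux.cCount_eq_length C w.edges hfree
          have h5 := SimpleGraph.Walk.length_edges w
          omega
        · have hlen : w.length = w₁.length + 1 + w₂.length := by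
            have hq := congrArg List.length hE
            simp only [List.length_append, List.length_cons,
              SimpleGraph.Walk.length_edges] at hq
            omega
          subst hw
          have hP : G.dist y₂ b ≤ ContractAux.cCount C w₂.edges + 1 :=
            (ih w₂.length (by omega)).1 y₂ b w₂ rfl
          have hkey : G.dist x y₂ = G.dist y x₂ := key x y x₂ y₂ hCxy hC₂
          have h1 : G.dist y x₂ ≤ w₁.length := SimpleGraph.dist_le w₁
          have htri : G.dist x b ≤ G.dist x y₂ + G.dist y₂ b := hconn.dist_triangle
          have hcount : ContractAux.cCount C w.edges =
              w₁.length + ContractAux.cCount C w₂.edges := by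
            rw [hE, ContractAux.cCount_append, ContractAux.cCount_cons, if_pos hC₂,
              ContractAux.cCount_eq_length C w₁.edges hfree, SimpleGraph.Walk.length_edges]
            omega
          omega
    intro u v
    rw [hcast u v]
    obtain ⟨w, hw⟩ := hnD_mem u v
    rw [← hw]
    exact (main w.length).1 u v w rfl
end

section
/- Let G = (V,E) be a graph with girth at least 6, unit edge lengths, and let C ⊆ E be such that (V,C) is disconnected. Then C is a weak (2,0)-contraction (every pair u,v with dist_{ℓ_C}(u,v) > 0 satisfies dist_{ℓ_C}(u,v) ≥ dist(u,v)/2) if and only if for any two edges e,f ∈ C, either e and f are incident and both contain a degree-1 vertex of G, or every path of G containing both e and f contains at least two edges not in C. -/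
open Classical

namespace WC

open SimpleGraph

variable {V : Type*} (G : SimpleGraph V) (C : Set (Sym2 V))

noncomputable def cnt {u v : V} (w : G.Walk u v) : ℕ :=
  (w.edges.filter (fun x => x ∉ C)).length

lemma walkLen_one {u v : V} (w : G.Walk u v) :
    walkLen G (fun _ => (1 : ℝ)) w = w.length := by
  simp [walkLen, ← Walk.length_edges]

lemma list_cnt (l : List (Sym2 V)) :
    (l.map (zeroOn (fun _ => (1 : ℝ)) C)).sum = ((l.filter (fun x => x ∉ C)).length : ℝ) := by
  induction l with
  | nil => simp
  | cons a t ih =>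
      by_cases h : a ∈ C <;>
        simp [zeroOn, h, ih, List.filter_cons] <;> ring

lemma walkLen_zeroOn {u v : V} (w : G.Walk u v) :
    walkLen G (zeroOn (fun _ => (1 : ℝ)) C) w = (cnt G C w : ℝ) :=
  list_cnt C w.edges

lemma sInf_nat_image {S : Set ℕ} (h : S.Nonempty) :
    sInf ((fun n : ℕ => (n : ℝ)) '' S) = ((sInf S : ℕ) : ℝ) := by
  apply le_antisymm
  · exact csInf_le ⟨0, by rintro x ⟨n, _, rfl⟩; positivity⟩ ⟨_, Nat.sInf_mem h, rfl⟩
  · refine le_csInf (h.image _) ?_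
    rintro x ⟨n, hn, rfl⟩
    simp only []
    exact_mod_cast Nat.sInf_le hn

lemma gdistC_spec {u v : V} (hr : G.Reachable u v) :
    ∃ w : G.Walk u v, gdist G (zeroOn (fun _ => (1 : ℝ)) C) u v = (cnt G C w : ℝ) ∧
      ∀ w' : G.Walk u v, cnt G C w ≤ cnt G C w' := by
  obtain ⟨w0⟩ := hr
  set S : Set ℕ := {n | ∃ w : G.Walk u v, cnt G C w = n} with hS
  have hne : S.Nonempty := ⟨_, w0, rfl⟩
  have him : {x : ℝ | ∃ w : G.Walk u v, walkLen G (zeroOn (fun _ => (1 : ℝ)) C) w = x}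
      = (fun n : ℕ => (n : ℝ)) '' S := by
    ext x
    constructor
    · rintro ⟨w, rfl⟩; exact ⟨cnt G C w, ⟨w, rfl⟩, (walkLen_zeroOn G C w).symm⟩
    · rintro ⟨n, ⟨w, rfl⟩, rfl⟩; exact ⟨w, walkLen_zeroOn G C w⟩
  obtain ⟨w, hw⟩ := Nat.sInf_mem hne
  refine ⟨w, ?_, ?_⟩
  · rw [gdist, him, sInf_nat_image hne, hw]
  · intro w'
    rw [hw]
    exact Nat.sInf_le ⟨w', rfl⟩

lemma gdist1_spec {u v : V} (hr : G.Reachable u v) :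
    ∃ w : G.Walk u v, gdist G (fun _ => (1 : ℝ)) u v = (w.length : ℝ) ∧
      ∀ w' : G.Walk u v, w.length ≤ w'.length := by
  obtain ⟨w0⟩ := hr
  set S : Set ℕ := {n | ∃ w : G.Walk u v, w.length = n} with hS
  have hne : S.Nonempty := ⟨_, w0, rfl⟩
  have him : {x : ℝ | ∃ w : G.Walk u v, walkLen G (fun _ => (1 : ℝ)) w = x}
      = (fun n : ℕ => (n : ℝ)) '' S := by
    ext x
    constructor
    · rintro ⟨w, rfl⟩; exact ⟨w.length, ⟨w, rfl⟩, (walkLen_one G w).symm⟩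
    · rintro ⟨n, ⟨w, rfl⟩, rfl⟩; exact ⟨w, walkLen_one G w⟩
  obtain ⟨w, hw⟩ := Nat.sInf_mem hne
  refine ⟨w, ?_, ?_⟩
  · rw [gdist, him, sInf_nat_image hne, hw]
  · intro w'
    rw [hw]
    exact Nat.sInf_le ⟨w', rfl⟩

lemma gdistC_le {u v : V} (w : G.Walk u v) :
    gdist G (zeroOn (fun _ => (1 : ℝ)) C) u v ≤ (cnt G C w : ℝ) := by
  apply csInf_le
  · refine ⟨0, ?_⟩
    rintro x ⟨w', rfl⟩
    rw [walkLen_zeroOn]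
    positivity
  · exact ⟨w, walkLen_zeroOn G C w⟩

lemma gdist1_le {u v : V} (w : G.Walk u v) :
    gdist G (fun _ => (1 : ℝ)) u v ≤ (w.length : ℝ) := by
  apply csInf_le
  · refine ⟨0, ?_⟩
    rintro x ⟨w', rfl⟩
    rw [walkLen_one]
    positivity
  · exact ⟨w, walkLen_one G w⟩

lemma gdistC_nonneg {u v : V} (w : G.Walk u v) :
    0 ≤ gdist G (zeroOn (fun _ => (1 : ℝ)) C) u v := by
  refine le_csInf ⟨_, w, rfl⟩ ?_
  rintro x ⟨w', rfl⟩
  rw [walkLen_zeroOn]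
  positivity

lemma reach_of_cnt_zero {u v : V} (w : G.Walk u v) (h : cnt G C w = 0) :
    (fromEdgeSet C).Reachable u v := by
  have hall : ∀ e ∈ w.edges, e ∈ (fromEdgeSet C).edgeSet := by
    intro e he
    rw [edgeSet_fromEdgeSet]
    have : ∀ e ∈ w.edges, ¬ (e ∉ C) := by
      simpa [cnt, List.length_eq_zero_iff, List.filter_eq_nil_iff] using h
    exact ⟨not_not.mp (this e he), G.not_isDiag_of_mem_edgeSet (w.edges_subset_edgeSet he)⟩
  exact ⟨w.transfer _ hall⟩

lemma cnt_zero_of_reach (hC : C ⊆ G.edgeSet) {u v : V}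
    (h : (fromEdgeSet C).Reachable u v) : ∃ w : G.Walk u v, cnt G C w = 0 := by
  obtain ⟨p⟩ := h
  have hall : ∀ e ∈ p.edges, e ∈ G.edgeSet := by
    intro e he
    have := p.edges_subset_edgeSet he
    rw [edgeSet_fromEdgeSet] at this
    exact hC this.1
  refine ⟨p.transfer G hall, ?_⟩
  have hedges : (p.transfer G hall).edges = p.edges := p.edges_transfer hall
  rw [cnt, hedges, List.length_eq_zero_iff, List.filter_eq_nil_iff]
  intro e he
  have := p.edges_subset_edgeSet he
  rw [edgeSet_fromEdgeSet] at this
  simp [this.1]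


lemma sixCyc (hgirth : 6 ≤ G.girth) :
    ∀ (a : V) (w : G.Walk a a), w.IsCycle → 6 ≤ w.length := by
  intro a w hw
  have h1 : G.egirth ≤ w.length := le_egirth.mp le_rfl a w hw
  have h2 : 6 ≤ G.egirth.toNat := hgirth
  calc (6 : ℕ) ≤ G.egirth.toNat := h2
    _ ≤ ((w.length : ℕ∞)).toNat := ENat.toNat_le_toNat h1 (by simp)
    _ = w.length := by simp

section
variable {G}
variable (hg6 : ∀ (a : V) (w : G.Walk a a), w.IsCycle → 6 ≤ w.length)

include hg6

lemma no3 {a b c : V} (h1 : G.Adj a b) (h2 : G.Adj b c) (h3 : G.Adj c a) : False := by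
  have hcyc : (Walk.cons h1 (Walk.cons h2 (Walk.cons h3 Walk.nil))).IsCycle := by
    rw [Walk.cons_isCycle_iff]
    constructor
    · simp [Walk.isPath_def, h2.ne, h3.ne, h1.ne']
    · simp [Sym2.eq_iff, h1.ne, h2.ne, h3.ne, h3.ne']
  have := hg6 a _ hcyc
  simp [Walk.length_cons] at this

lemma no4 {a b c d : V} (h1 : G.Adj a b) (h2 : G.Adj b c) (h3 : G.Adj c d)
    (h4 : G.Adj d a) (hac : a ≠ c) (hbd : b ≠ d) : False := by
  have hcyc : (Walk.cons h1 (Walk.cons h2 (Walk.cons h3 (Walk.cons h4 Walk.nil)))).IsCycle := by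
    rw [Walk.cons_isCycle_iff]
    constructor
    · simp [Walk.isPath_def, h2.ne, h3.ne, h4.ne, hbd, h1.ne', hac.symm]
    · simp [Sym2.eq_iff, h1.ne, hbd, hac, h4.ne', h1.ne']
  have := hg6 a _ hcyc
  simp [Walk.length_cons] at this

lemma no5 {a b c d e : V} (h1 : G.Adj a b) (h2 : G.Adj b c) (h3 : G.Adj c d)
    (h4 : G.Adj d e) (h5 : G.Adj e a) (hac : a ≠ c) (had : a ≠ d) (hbd : b ≠ d)
    (hbe : b ≠ e) (hce : c ≠ e) : False := by
  have hcyc : (Walk.cons h1 (Walk.cons h2 (Walk.cons h3 (Walk.cons h4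
      (Walk.cons h5 Walk.nil))))).IsCycle := by
    rw [Walk.cons_isCycle_iff]
    constructor
    · simp [Walk.isPath_def, h2.ne, h3.ne, h4.ne, h5.ne, hbd, hbe, hce, h1.ne', hac.symm, had.symm]
    · simp [Sym2.eq_iff, h1.ne, hbd, hac, hbe, h5.ne, h1.ne']
      tauto
  have := hg6 a _ hcyc
  simp [Walk.length_cons] at this

end

lemma walk_le_two {t x : V} (w : G.Walk t x) (h : w.length ≤ 2) :
    t = x ∨ G.Adj t x ∨ ∃ y, G.Adj t y ∧ G.Adj y x := by
  cases w with
  | nil => exact Or.inl rfl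
  | cons h1 q =>
    cases q with
    | nil => exact Or.inr (Or.inl h1)
    | cons h2 q2 =>
      cases q2 with
      | nil => exact Or.inr (Or.inr ⟨_, h1, h2⟩)
      | cons h3 q3 => simp [Walk.length_cons] at h

lemma deg2 [Fintype V] {a b c : V} (h1 : G.Adj a b) (h2 : G.Adj a c) (h : b ≠ c) :
    2 ≤ G.degree a := by
  rw [← card_neighborFinset_eq_degree]
  exact Finset.one_lt_card.2 ⟨b, by simpa using h1, c, by simpa using h2, h⟩

lemma two_le_length {α : Type*} {l : List α} {a b : α} (ha : a ∈ l) (hb : b ∈ l)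
    (hab : a ≠ b) : 2 ≤ l.length := by
  match l with
  | [] => simp at ha
  | [x] => simp at ha hb; subst ha hb; exact absurd rfl hab
  | x :: y :: t => simp [Nat.succ_le_succ]

section Heavy
variable [Fintype V] {G} {C}

lemma cnt_cons_mem {u x v : V} (h : G.Adj u x) (q : G.Walk x v) (hm : s(u,x) ∈ C) :
    cnt G C (Walk.cons h q) = cnt G C q := by
  simp [cnt, List.filter_cons, hm]

lemma cnt_cons_not {u x v : V} (h : G.Adj u x) (q : G.Walk x v) (hm : s(u,x) ∉ C) :
    cnt G C (Walk.cons h q) = cnt G C q + 1 := by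
  simp [cnt, List.filter_cons, hm]

variable (hconn : G.Connected) (hC : C ⊆ G.edgeSet)
  (hg6 : ∀ (a : V) (w : G.Walk a a), w.IsCycle → 6 ≤ w.length)
  (hlhs : ∀ u v : V, gdist G (zeroOn (fun _ => (1 : ℝ)) C) u v = 0 ∨
       gdist G (fun _ => (1 : ℝ)) u v / 2 ≤ gdist G (zeroOn (fun _ => (1 : ℝ)) C) u v)

include hconn hlhs in
lemma short_walk {t x : V} (hnr : ¬ (fromEdgeSet C).Reachable t x)
    (w0 : G.Walk t x) (hw0 : cnt G C w0 ≤ 1) :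
    ∃ w : G.Walk t x, w.length ≤ 2 := by
  have hr := hconn.preconnected t x
  obtain ⟨wc, hec, hmin⟩ := gdistC_spec G C hr
  have hpos : cnt G C wc ≠ 0 := fun h => hnr (reach_of_cnt_zero G C wc h)
  have hub : gdist G (zeroOn (fun _ => (1 : ℝ)) C) t x ≤ 1 :=
    le_trans (gdistC_le G C w0) (by exact_mod_cast hw0)
  rcases hlhs t x with h0 | h2
  · rw [hec] at h0
    exact absurd (by exact_mod_cast h0) hpos
  · obtain ⟨w1, he1, _⟩ := gdist1_spec G hr
    refine ⟨w1, ?_⟩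
    have hl : (w1.length : ℝ) ≤ 2 := by rw [← he1]; linarith
    exact_mod_cast hl

include hconn hC hg6 hlhs in
lemma nbr_in_K {u m v z : V} (he : s(u,m) ∈ C) (hf : s(m,v) ∈ C)
    (huv : u ≠ v) (hz : G.Adj u z) (hzm : z ≠ m) : (fromEdgeSet C).Reachable z v := by
  have hum : G.Adj u m := (mem_edgeSet G).1 (hC he)
  have hmv : G.Adj m v := (mem_edgeSet G).1 (hC hf)
  have hzv : z ≠ v := by
    rintro rfl
    exact no3 hg6 hum hmv hz.symm
  by_contra hnr
  obtain ⟨w, hw⟩ := short_walk hconn hlhs hnr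
      (Walk.cons hz.symm (Walk.cons hum (Walk.cons hmv Walk.nil)))
      (by by_cases hzu : s(z,u) ∈ C <;>
            simp [cnt, List.filter_cons, hzu, he, hf])
  rcases walk_le_two G w hw with rfl | hadj | ⟨y, hzy, hyv⟩
  · exact hzv rfl
  · exact no4 hg6 hz.symm hum hmv hadj.symm hzm huv
  · by_cases hyu : y = u
    · subst hyu
      exact no3 hg6 hum hmv hyv.symm
    · by_cases hym : y = m
      · subst hym
        exact no3 hg6 hz.symm hum hzy.symm
      · exact no5 hg6 hz.symm hum hmv hyv.symm hzy.symm hzm hzv huv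
          (fun h => hyu h.symm) (fun h => hym h.symm)

include hconn hC hg6 hlhs in
lemma K_closed {u m v : V} (he : s(u,m) ∈ C) (hf : s(m,v) ∈ C) (huv : u ≠ v)
    (hdeg : 2 ≤ G.degree u) {w t : V} (hw : (fromEdgeSet C).Reachable m w)
    (ht : G.Adj w t) : (fromEdgeSet C).Reachable m t := by
  have hum : G.Adj u m := (mem_edgeSet G).1 (hC he)
  have hmv : G.Adj m v := (mem_edgeSet G).1 (hC hf)
  have hmu : (fromEdgeSet C).Reachable m u :=
    (((fromEdgeSet_adj C).2 ⟨he, hum.ne⟩ : (fromEdgeSet C).Adj u m).symm).reachable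
  have hmv' : (fromEdgeSet C).Reachable m v :=
    ((fromEdgeSet_adj C).2 ⟨hf, hmv.ne⟩ : (fromEdgeSet C).Adj m v).reachable
  obtain ⟨z, hzmem, hzm⟩ := Finset.exists_mem_ne
    (s := G.neighborFinset u) (by rw [card_neighborFinset_eq_degree]; omega) m
  have hz : G.Adj u z := (mem_neighborFinset G u z).1 hzmem
  have hmz : (fromEdgeSet C).Reachable m z :=
    hmv'.trans (nbr_in_K hconn hC hg6 hlhs he hf huv hz hzm).symm
  by_contra hnt
  have key : ∀ x : V, (fromEdgeSet C).Reachable m x →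
      t = x ∨ G.Adj t x ∨ ∃ y, G.Adj t y ∧ G.Adj y x := by
    intro x hx
    have hnr : ¬ (fromEdgeSet C).Reachable t x := fun h => hnt (hx.trans h.symm)
    obtain ⟨pw⟩ := hw.symm.trans hx
    have hall : ∀ e ∈ pw.edges, e ∈ G.edgeSet := by
      intro e hee
      have h' := pw.edges_subset_edgeSet hee
      rw [edgeSet_fromEdgeSet] at h'
      exact hC h'.1
    obtain ⟨wsh, hwsh⟩ := short_walk hconn hlhs hnr
        (Walk.cons ht.symm (pw.transfer G hall)) (by
      have hmemC : ∀ e ∈ (pw.transfer G hall).edges, e ∈ C := by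
        intro e hee
        rw [Walk.edges_transfer] at hee
        have h' := pw.edges_subset_edgeSet hee
        rw [edgeSet_fromEdgeSet] at h'
        exact h'.1
      have h0 : cnt G C (pw.transfer G hall) = 0 := by
        rw [cnt, List.length_eq_zero_iff, List.filter_eq_nil_iff]
        intro e hee
        simpa using hmemC e hee
      by_cases htw : s(t,w) ∈ C
      · rw [cnt_cons_mem _ _ htw, h0]; omega
      · rw [cnt_cons_not _ _ htw, h0])
    exact walk_le_two G wsh hwsh
  have htu : t ≠ u := fun h => hnt (h ▸ hmu)
  have htm : t ≠ m := fun h => hnt (by rw [h])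
  have htv : t ≠ v := fun h => hnt (h ▸ hmv')
  have htz : t ≠ z := fun h => hnt (h ▸ hmz)
  by_cases hAtu : G.Adj t u
  · exact hnt (hmv'.trans (nbr_in_K hconn hC hg6 hlhs he hf huv hAtu.symm htm).symm)
  by_cases hAtm : G.Adj t m
  · rcases key z hmz with h | hAtz | ⟨y, hty, hyz⟩
    · exact htz h
    · exact no4 hg6 hAtz hz.symm hum hAtm.symm htu hzm
    · by_cases hyu : y = u
      · subst hyu; exact hAtu hty
      · by_cases hym : y = m
        · subst hym; exact no3 hg6 hz.symm hum hyz
        · exact no5 hg6 hAtm hum.symm hz hyz.symm hty.symm htu htz hzm.symm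
            (fun h => hym h.symm) (fun h => hyu h.symm)
  · rcases key m (Reachable.refl m) with h | h | ⟨b, htb, hbm⟩
    · exact htm h
    · exact hAtm h
    rcases key u hmu with h | h | ⟨a, hta, hau⟩
    · exact htu h
    · exact hAtu h
    have ham : a ≠ m := fun h => hAtm (h ▸ hta)
    have hbu : b ≠ u := fun h => hAtu (h ▸ htb)
    by_cases hab : a = b
    · subst hab
      exact no3 hg6 hau hum hbm.symm
    · exact no5 hg6 hta hau hum hbm.symm htb.symm htu htm ham hab
        (fun h => hbu h.symm)

include hconn hC hg6 hlhs in
lemma F1_absurd (hdisc : ¬ (fromEdgeSet C).Preconnected) {u m v : V}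
    (he : s(u,m) ∈ C) (hf : s(m,v) ∈ C) (huv : u ≠ v)
    (hdeg : 2 ≤ G.degree u) : False := by
  apply hdisc
  have step : ∀ (s x : V) (p : G.Walk s x),
      (fromEdgeSet C).Reachable m s → (fromEdgeSet C).Reachable m x := by
    intro s x p
    induction p with
    | nil => exact id
    | cons h q ih => exact fun hs => ih (K_closed hconn hC hg6 hlhs he hf huv hdeg hs h)
  have hall : ∀ x, (fromEdgeSet C).Reachable m x := by
    intro x
    obtain ⟨p⟩ := hconn.preconnected m x
    exact step m x p (Reachable.refl m)
  exact fun a b => (hall a).symm.trans (hall b)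

include hconn hC hg6 hlhs in
lemma noF1 (hdisc : ¬ (fromEdgeSet C).Preconnected) {a b c : V}
    (hab : s(a,b) ∈ C) (hbc : s(b,c) ∈ C) (hac : a ≠ c) :
    G.degree a = 1 ∧ G.degree c = 1 := by
  have hA : G.Adj a b := (mem_edgeSet G).1 (hC hab)
  have hB : G.Adj b c := (mem_edgeSet G).1 (hC hbc)
  constructor
  · by_contra h
    have h1 : 1 ≤ G.degree a := by
      rw [← card_neighborFinset_eq_degree]
      exact Finset.card_pos.2 ⟨b, (mem_neighborFinset G a b).2 hA⟩
    exact F1_absurd hconn hC hg6 hlhs hdisc hab hbc hac (by omega)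
  · by_contra h
    have h1 : 1 ≤ G.degree c := by
      rw [← card_neighborFinset_eq_degree]
      exact Finset.card_pos.2 ⟨b, (mem_neighborFinset G c b).2 hB.symm⟩
    exact F1_absurd hconn hC hg6 hlhs hdisc (Sym2.eq_swap ▸ hbc) (Sym2.eq_swap ▸ hab)
      hac.symm (by omega)

omit [Fintype V] in
lemma path_ne2 {u x1 x2 v : V} {h1 : G.Adj u x1} {h2 : G.Adj x1 x2} {q2 : G.Walk x2 v}
    (hp : (Walk.cons h1 (Walk.cons h2 q2)).IsPath) : u ≠ x2 := by
  have hnd := hp.support_nodup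
  simp only [Walk.support_cons, List.nodup_cons] at hnd
  intro h
  exact hnd.1 (by rw [h]; simp [Walk.start_mem_support])

omit [Fintype V] in
lemma path_ne3 {u x1 x2 x3 v : V} {h1 : G.Adj u x1} {h2 : G.Adj x1 x2} {h3 : G.Adj x2 x3}
    {q3 : G.Walk x3 v}
    (hp : (Walk.cons h1 (Walk.cons h2 (Walk.cons h3 q3))).IsPath) : u ≠ x3 := by
  have hnd := hp.support_nodup
  simp only [Walk.support_cons, List.nodup_cons] at hnd
  intro h
  exact hnd.1 (by rw [h]; simp [Walk.start_mem_support])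

include hconn hC hg6 hlhs in
lemma chain3 (hdisc : ¬ (SimpleGraph.fromEdgeSet C).Preconnected) :
    ∀ {b c : V} (P : G.Walk b c), P.IsPath → (∀ e ∈ P.edges, e ∈ C) → 3 ≤ P.length → False := by
  intro b c P hp hP hlen
  cases P with
  | nil => simp at hlen
  | cons h1 q =>
    cases q with
    | nil => simp at hlen
    | cons h2 q2 =>
      cases q2 with
      | nil => simp [Walk.length_cons] at hlen
      | cons h3 q3 =>
        rename_i x1 x2 x3
        have e2 : s(x1,x2) ∈ C := hP _ (by simp)
        have e3 : s(x2,x3) ∈ C := hP _ (by simp)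
        have h13 : x1 ≠ x3 := path_ne2 (hp.of_cons)
        have hb2 : b ≠ x2 := path_ne2 hp
        have hdeg := (noF1 hconn hC hg6 hlhs hdisc e2 e3 h13).1
        have h2d : 2 ≤ G.degree x1 := deg2 G h1.symm h2 hb2
        omega

include hconn hC hg6 hlhs in
lemma noF3 (hdisc : ¬ (SimpleGraph.fromEdgeSet C).Preconnected) {a b c d : V}
    (hab : s(a,b) ∈ C) (hbc : G.Adj b c) (hbcC : s(b,c) ∉ C)
    (hcd : s(c,d) ∈ C) (hac : a ≠ c) (had : a ≠ d) (hbd : b ≠ d) : False := by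
  have hA : G.Adj a b := (mem_edgeSet G).1 (hC hab)
  have hD : G.Adj c d := (mem_edgeSet G).1 (hC hcd)
  by_cases hr : (fromEdgeSet C).Reachable b c
  · obtain ⟨pw0⟩ := hr
    have hPpath : pw0.bypass.IsPath := pw0.bypass_isPath
    have hall : ∀ e ∈ pw0.bypass.edges, e ∈ G.edgeSet := by
      intro e hee
      have h' := pw0.bypass.edges_subset_edgeSet hee
      rw [edgeSet_fromEdgeSet] at h'
      exact hC h'.1
    have hPGpath : (pw0.bypass.transfer G hall).IsPath := hPpath.transfer hall
    have hPGedges : ∀ e ∈ (pw0.bypass.transfer G hall).edges, e ∈ C := by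
      intro e hee
      rw [Walk.edges_transfer] at hee
      have h' := pw0.bypass.edges_subset_edgeSet hee
      rw [edgeSet_fromEdgeSet] at h'
      exact h'.1
    have hcyc : (Walk.cons hbc.symm (pw0.bypass.transfer G hall)).IsCycle := by
      rw [Walk.cons_isCycle_iff]
      refine ⟨hPGpath, fun hmem => hbcC ?_⟩
      have h' := hPGedges _ hmem
      rwa [Sym2.eq_swap] at h'
    have hlen : 6 ≤ (pw0.bypass.transfer G hall).length + 1 := by
      simpa [Walk.length_cons] using hg6 c _ hcyc
    exact chain3 hconn hC hg6 hlhs hdisc (pw0.bypass.transfer G hall) hPGpath hPGedges (by omega)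
  · have hnr : ¬ (fromEdgeSet C).Reachable a d := by
      intro h
      apply hr
      have hba : (fromEdgeSet C).Reachable b a :=
        ((fromEdgeSet_adj C).2 ⟨hab, hA.ne⟩ : (fromEdgeSet C).Adj a b).symm.reachable
      have hdc : (fromEdgeSet C).Reachable d c :=
        ((fromEdgeSet_adj C).2 ⟨hcd, hD.ne⟩ : (fromEdgeSet C).Adj c d).symm.reachable
      exact hba.trans (h.trans hdc)
    obtain ⟨wsh, hwsh⟩ := short_walk hconn hlhs hnr
        (Walk.cons hA (Walk.cons hbc (Walk.cons hD Walk.nil)))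
        (by rw [cnt_cons_mem _ _ hab, cnt_cons_not _ _ hbcC, cnt_cons_mem _ _ hcd]
            simp [cnt])
    rcases walk_le_two G wsh hwsh with h | hadj | ⟨y, hay, hyd⟩
    · exact had h
    · exact no4 hg6 hA hbc hD hadj.symm hac hbd
    · by_cases hyb : y = b
      · subst hyb
        exact no3 hg6 hbc hD hyd.symm
      · by_cases hyc : y = c
        · subst hyc
          exact no3 hg6 hA hbc hay.symm
        · exact no5 hg6 hA hbc hD hyd.symm hay.symm hac had hbd
            (fun h => hyb h.symm) (fun h => hyc h.symm)

omit [Fintype V] in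
lemma twoNonC [Fintype V]
    (hnoF1 : ∀ a b c : V, s(a,b) ∈ C → s(b,c) ∈ C → a ≠ c →
        G.degree a = 1 ∧ G.degree c = 1)
    (hnoF3 : ∀ a b c d : V, s(a,b) ∈ C → G.Adj b c → s(b,c) ∉ C → s(c,d) ∈ C →
        a ≠ c → a ≠ d → b ≠ d → False) :
    ∀ {u v : V} (p : G.Walk u v), p.IsPath → ∀ e f : Sym2 V, e ∈ p.edges → f ∈ p.edges →
      e ≠ f → e ∈ C → f ∈ C → (¬ ∃ x : V, x ∈ e ∧ x ∈ f) → 2 ≤ cnt G C p := by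
  intro u v p
  induction p with
  | nil =>
    intro _ e f he
    simp at he
  | @cons u x1 v h1 q ih =>
    intro hp e f hep hfp hef heC hfC hshare
    rw [Walk.edges_cons] at hep hfp
    have core : ∀ ee ff : Sym2 V, ee = s(u,x1) → ff ∈ q.edges → ff ≠ ee → ee ∈ C → ff ∈ C →
        (¬ ∃ x : V, x ∈ ee ∧ x ∈ ff) → 2 ≤ cnt G C (Walk.cons h1 q) := by
      rintro ee ff rfl hffq hne heeC hffC hsh
      cases q with
      | nil => simp at hffq
      | @cons x1' x2 v' h2 q2 =>
        rw [Walk.edges_cons] at hffq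
        rcases List.mem_cons.1 hffq with hff2 | hffq2
        · exact absurd ⟨x1, by simp, by rw [hff2]; simp⟩ hsh
        · by_cases h2C : s(x1,x2) ∈ C
          · have hd := (hnoF1 u x1 x2 heeC h2C (path_ne2 hp)).2
            cases q2 with
            | nil => simp at hffq2
            | @cons x2' x3 v'' h3 q3 =>
              have h2d : 2 ≤ G.degree x2 :=
                deg2 G h2.symm h3 (path_ne2 (hp.of_cons))
              omega
          · cases q2 with
            | nil => simp at hffq2
            | @cons x2' x3 v'' h3 q3 =>
              by_cases h3C : s(x2,x3) ∈ C
              · exact absurd (hnoF3 u x1 x2 x3 heeC h2 h2C h3C (path_ne2 hp)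
                  (path_ne3 hp) (path_ne2 (hp.of_cons))) id
              · have hne23 : s(x1,x2) ≠ s(x2,x3) := by
                  rw [Ne, Sym2.eq_iff]
                  rintro (⟨rfl, rfl⟩ | ⟨h', -⟩)
                  · exact h2.ne rfl
                  · exact (path_ne2 (hp.of_cons)) h'
                have hm2 : s(x1,x2) ∈ ((Walk.cons h1 (Walk.cons h2 (Walk.cons h3 q3))).edges.filter
                    (fun x => x ∉ C)) := by
                  rw [List.mem_filter]
                  exact ⟨by simp, by simp [h2C]⟩
                have hm3 : s(x2,x3) ∈ ((Walk.cons h1 (Walk.cons h2 (Walk.cons h3 q3))).edges.filter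
                    (fun x => x ∉ C)) := by
                  rw [List.mem_filter]
                  exact ⟨by simp, by simp [h3C]⟩
                exact two_le_length hm2 hm3 hne23
    rcases List.mem_cons.1 hep with he1 | heq
    · rcases List.mem_cons.1 hfp with hf1 | hfq
      · exact absurd (he1.trans hf1.symm) hef
      · exact core e f he1 hfq (fun h => hef h.symm) heC hfC hshare
    · rcases List.mem_cons.1 hfp with hf1 | hfq
      · refine core f e hf1 heq hef hfC heC ?_
        rintro ⟨x, hx1, hx2⟩
        exact hshare ⟨x, hx2, hx1⟩
      · have h2 := ih (hp.of_cons) e f heq hfq hef heC hfC hshare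
        by_cases h1C : s(u,x1) ∈ C
        · rw [cnt_cons_mem _ _ h1C]; omega
        · rw [cnt_cons_not _ _ h1C]; omega
section Rev
variable (hrhs : ∀ e ∈ C, ∀ f ∈ C, e ≠ f →
      ((∃ x : V, x ∈ e ∧ x ∈ f) ∧ (∃ a ∈ e, G.degree a = 1) ∧ (∃ b ∈ f, G.degree b = 1)) ∨
      (∀ (u v : V) (p : G.Walk u v), p.IsPath → e ∈ p.edges → f ∈ p.edges →
        2 ≤ (p.edges.filter (fun x => x ∉ C)).length))

include hC hrhs in
lemma ruleA {a b c : V} (hab : s(a,b) ∈ C) (hbc : s(b,c) ∈ C) (hac : a ≠ c) :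
    G.degree a = 1 ∧ G.degree c = 1 := by
  have hA : G.Adj a b := (mem_edgeSet G).1 (hC hab)
  have hB : G.Adj b c := (mem_edgeSet G).1 (hC hbc)
  have hef : s(a,b) ≠ s(b,c) := by
    rw [Ne, Sym2.eq_iff]
    rintro (⟨rfl, rfl⟩ | ⟨h, -⟩)
    · exact hA.ne rfl
    · exact hac h
  have hpath : (Walk.cons hA (Walk.cons hB Walk.nil)).IsPath := by
    simp [Walk.isPath_def, hA.ne, hB.ne, hac]
  have hdegb : 2 ≤ G.degree b := deg2 G hA.symm hB hac
  rcases hrhs _ hab _ hbc hef with ⟨-, ⟨a', ha'e, ha'deg⟩, ⟨c', hc'f, hc'deg⟩⟩ | h2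
  · constructor
    · rcases Sym2.mem_iff.1 ha'e with rfl | rfl
      · exact ha'deg
      · omega
    · rcases Sym2.mem_iff.1 hc'f with rfl | rfl
      · omega
      · exact hc'deg
  · have h3 := h2 a c _ hpath (by simp) (by simp)
    simp [List.filter_cons, hab, hbc] at h3

include hC hrhs in
lemma ruleB {a b c d : V} (hab : s(a,b) ∈ C) (hbc : G.Adj b c) (hbcC : s(b,c) ∉ C)
    (hcd : s(c,d) ∈ C) (hac : a ≠ c) (had : a ≠ d) (hbd : b ≠ d) : False := by
  have hA : G.Adj a b := (mem_edgeSet G).1 (hC hab)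
  have hD : G.Adj c d := (mem_edgeSet G).1 (hC hcd)
  have hef : s(a,b) ≠ s(c,d) := by
    rw [Ne, Sym2.eq_iff]
    rintro (⟨h, -⟩ | ⟨h, -⟩)
    · exact hac h
    · exact had h
  have hpath : (Walk.cons hA (Walk.cons hbc (Walk.cons hD Walk.nil))).IsPath := by
    simp [Walk.isPath_def, hA.ne, hbc.ne, hD.ne, hac, had, hbd]
  rcases hrhs _ hab _ hcd hef with ⟨⟨x, hx1, hx2⟩, -, -⟩ | h2
  · rcases Sym2.mem_iff.1 hx1 with rfl | rfl <;> rcases Sym2.mem_iff.1 hx2 with h | h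
    · exact hac h
    · exact had h
    · exact hbc.ne h
    · exact hbd h
  · have h3 := h2 a d _ hpath (by simp) (by simp)
    simp [List.filter_cons, hab, hbcC, hcd] at h3

end Rev

lemma count_aux
    (RA : ∀ a b c : V, s(a,b) ∈ C → s(b,c) ∈ C → a ≠ c →
        G.degree a = 1 ∧ G.degree c = 1)
    (RB : ∀ a b c d : V, s(a,b) ∈ C → G.Adj b c → s(b,c) ∉ C → s(c,d) ∈ C →
        a ≠ c → a ≠ d → b ≠ d → False) :
    ∀ (n : ℕ) {u v : V} (p : G.Walk u v), p.length ≤ n → p.IsPath → 2 ≤ G.degree u →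
      p.length ≤ 2 * cnt G C p + 1 := by
  intro n
  induction n with
  | zero => intro u v p hl _ _; omega
  | succ n ihn =>
    intro u v p hl hp hdeg
    cases p with
    | nil => simp
    | @cons u x1 v h1 q =>
      cases q with
      | nil => simp
      | @cons x1' x2 v' h2 q2 =>
        by_cases h1C : s(u,x1) ∈ C
        · by_cases h2C : s(x1,x2) ∈ C
          · have := (RA u x1 x2 h1C h2C (path_ne2 hp)).1
            omega
          · cases q2 with
            | nil =>
              rw [cnt_cons_mem _ _ h1C, cnt_cons_not _ _ h2C]
              simp [cnt]
            | @cons x2' x3 v'' h3 q3 =>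
              by_cases h3C : s(x2,x3) ∈ C
              · exact absurd (RB u x1 x2 x3 h1C h2 h2C h3C (path_ne2 hp)
                  (path_ne3 hp) (path_ne2 (hp.of_cons))) id
              · have hih : q3.length ≤ 2 * cnt G C q3 + 1 := by
                  cases q3 with
                  | nil => simp
                  | @cons x3' x4 v''' h4 q4 =>
                    refine ihn _ ?_ (hp.of_cons.of_cons.of_cons) ?_
                    · have := hl
                      simp only [Walk.length_cons] at this ⊢
                      omega
                    · exact deg2 G h3.symm h4 (path_ne2 (hp.of_cons.of_cons))
                rw [cnt_cons_mem _ _ h1C, cnt_cons_not _ _ h2C, cnt_cons_not _ _ h3C]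
                simp only [Walk.length_cons]
                omega
        · have hih : (Walk.cons h2 q2).length ≤ 2 * cnt G C (Walk.cons h2 q2) + 1 := by
            refine ihn _ ?_ (hp.of_cons) (deg2 G h1.symm h2 (path_ne2 hp))
            simp only [Walk.length_cons] at hl ⊢
            omega
          rw [cnt_cons_not _ _ h1C]
          simp only [Walk.length_cons] at hih ⊢
          omega

lemma count_main
    (RA : ∀ a b c : V, s(a,b) ∈ C → s(b,c) ∈ C → a ≠ c →
        G.degree a = 1 ∧ G.degree c = 1)
    (RB : ∀ a b c d : V, s(a,b) ∈ C → G.Adj b c → s(b,c) ∉ C → s(c,d) ∈ C →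
        a ≠ c → a ≠ d → b ≠ d → False)
    {u v : V} (p : G.Walk u v) (hp : p.IsPath) (hc : 1 ≤ cnt G C p) :
    p.length ≤ 2 * cnt G C p := by
  cases p with
  | nil => simp [cnt] at hc
  | @cons u x1 v h1 q =>
    cases q with
    | nil => simp only [Walk.length_cons, Walk.length_nil]; omega
    | @cons x1' x2 v' h2 q2 =>
      by_cases h1C : s(u,x1) ∈ C
      · by_cases h2C : s(x1,x2) ∈ C
        · have hAB := (RA u x1 x2 h1C h2C (path_ne2 hp)).2
          cases q2 with
          | nil =>
            rw [cnt_cons_mem _ _ h1C, cnt_cons_mem _ _ h2C] at hc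
            simp [cnt] at hc
          | @cons x2' x3 v'' h3 q3 =>
            have := deg2 G h2.symm h3 (path_ne2 (hp.of_cons))
            omega
        · cases q2 with
          | nil =>
            rw [cnt_cons_mem _ _ h1C, cnt_cons_not _ _ h2C]
            simp [cnt]
          | @cons x2' x3 v'' h3 q3 =>
            by_cases h3C : s(x2,x3) ∈ C
            · exact absurd (RB u x1 x2 x3 h1C h2 h2C h3C (path_ne2 hp)
                (path_ne3 hp) (path_ne2 (hp.of_cons))) id
            · have hih : q3.length ≤ 2 * cnt G C q3 + 1 := by
                cases q3 with
                | nil => simp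
                | @cons x3' x4 v''' h4 q4 =>
                  exact count_aux RA RB _ _ le_rfl (hp.of_cons.of_cons.of_cons)
                    (deg2 G h3.symm h4 (path_ne2 (hp.of_cons.of_cons)))
              rw [cnt_cons_mem _ _ h1C, cnt_cons_not _ _ h2C, cnt_cons_not _ _ h3C]
              simp only [Walk.length_cons]
              omega
      · have hih : (Walk.cons h2 q2).length ≤ 2 * cnt G C (Walk.cons h2 q2) + 1 :=
          count_aux RA RB _ _ le_rfl (hp.of_cons) (deg2 G h1.symm h2 (path_ne2 hp))
        rw [cnt_cons_not _ _ h1C]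
        simp only [Walk.length_cons] at hih ⊢
        omega

omit [Fintype V] in
lemma cnt_bypass {u v : V} (w : G.Walk u v) : cnt G C w.bypass ≤ cnt G C w := by
  have hnd : (w.bypass.edges.filter (fun x => x ∉ C)).Nodup :=
    (w.bypass_isPath.isTrail.edges_nodup).filter _
  rw [cnt, cnt]
  calc (w.bypass.edges.filter (fun x => x ∉ C)).length
      = (w.bypass.edges.filter (fun x => x ∉ C)).toFinset.card :=
        (List.toFinset_card_of_nodup hnd).symm
    _ ≤ (w.edges.filter (fun x => x ∉ C)).toFinset.card := by
        apply Finset.card_le_card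
        intro x hx
        rw [List.mem_toFinset] at *
        obtain ⟨hmem, hprop⟩ := List.mem_filter.1 hx
        exact List.mem_filter.2 ⟨w.edges_bypass_subset hmem, hprop⟩
    _ ≤ (w.edges.filter (fun x => x ∉ C)).length := List.toFinset_card_le _

end Heavy

end WC

theorem weak_contraction_girth_six {V : Type*} [Fintype V] (G : SimpleGraph V)
    (hconn : G.Connected) (hgirth : 6 ≤ G.girth)
    (C : Set (Sym2 V)) (hC : C ⊆ G.edgeSet)
    (hdisc : ¬ (SimpleGraph.fromEdgeSet C).Preconnected) :
    (∀ u v : V, gdist G (zeroOn (fun _ => (1 : ℝ)) C) u v = 0 ∨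
       gdist G (fun _ => (1 : ℝ)) u v / 2 ≤ gdist G (zeroOn (fun _ => (1 : ℝ)) C) u v) ↔
    (∀ e ∈ C, ∀ f ∈ C, e ≠ f →
      ((∃ x : V, x ∈ e ∧ x ∈ f) ∧ (∃ a ∈ e, G.degree a = 1) ∧ (∃ b ∈ f, G.degree b = 1)) ∨
      (∀ (u v : V) (p : G.Walk u v), p.IsPath → e ∈ p.edges → f ∈ p.edges →
        2 ≤ (p.edges.filter (fun x => x ∉ C)).length)) := by
  have hg6 := WC.sixCyc G hgirth
  constructor
  · intro hlhs e he f hf hef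
    by_cases hshare : ∃ x : V, x ∈ e ∧ x ∈ f
    · left
      obtain ⟨x, hxe, hxf⟩ := hshare
      obtain ⟨y, rfl⟩ := Sym2.mem_iff_exists.1 hxe
      obtain ⟨z, rfl⟩ := Sym2.mem_iff_exists.1 hxf
      have hyz : y ≠ z := fun h => hef (by rw [h])
      have hd := WC.noF1 hconn hC hg6 hlhs hdisc (a := y) (b := x) (c := z)
        (Sym2.eq_swap ▸ he) hf hyz
      exact ⟨⟨x, hxe, hxf⟩, ⟨y, by simp, hd.1⟩, ⟨z, by simp, hd.2⟩⟩
    · right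
      intro u v p hp hep hfp
      exact WC.twoNonC
        (fun a b c hab hbc hac => WC.noF1 hconn hC hg6 hlhs hdisc hab hbc hac)
        (fun a b c d hab hbc hbcC hcd hac had hbd =>
          WC.noF3 hconn hC hg6 hlhs hdisc hab hbc hbcC hcd hac had hbd)
        p hp e f hep hfp hef he hf hshare
  · intro hrhs u v
    by_cases hr : (SimpleGraph.fromEdgeSet C).Reachable u v
    · left
      obtain ⟨w, hw⟩ := WC.cnt_zero_of_reach G C hC hr
      have h1 := WC.gdistC_le G C w
      have h2 := WC.gdistC_nonneg G C w
      rw [hw] at h1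
      norm_num at h1
      linarith
    · right
      have hreach := hconn.preconnected u v
      obtain ⟨wc, hec, hmin⟩ := WC.gdistC_spec G C hreach
      have hppos : 1 ≤ WC.cnt G C wc.bypass := by
        rcases Nat.eq_zero_or_pos (WC.cnt G C wc.bypass) with h0 | h
        · exact absurd (WC.reach_of_cnt_zero G C wc.bypass h0) hr
        · omega
      have hple : WC.cnt G C wc.bypass ≤ WC.cnt G C wc := WC.cnt_bypass wc
      have hlen := WC.count_main
        (fun a b c hab hbc hac => WC.ruleA hC hrhs hab hbc hac)
        (fun a b c d hab hbc hbcC hcd hac had hbd =>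
          WC.ruleB hC hrhs hab hbc hbcC hcd hac had hbd)
        wc.bypass wc.bypass_isPath hppos
      have hg1 := WC.gdist1_le G wc.bypass
      rw [hec]
      have hfin : gdist G (fun _ => (1 : ℝ)) u v ≤ 2 * (WC.cnt G C wc : ℝ) := by
        calc gdist G (fun _ => (1 : ℝ)) u v ≤ (wc.bypass.length : ℝ) := hg1
          _ ≤ 2 * (WC.cnt G C wc.bypass : ℝ) := by exact_mod_cast hlen
          _ ≤ 2 * (WC.cnt G C wc : ℝ) := by
              have : (WC.cnt G C wc.bypass : ℝ) ≤ (WC.cnt G C wc : ℝ) := by exact_mod_cast hple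
              linarith
      linarith
end

section
/- Let G be a graph with girth at least 6, unit edge lengths, and no vertex of degree 1, and let C ⊆ E(G) be a weak (2,0)-contraction. Then every connected component of the graph (V, C) is a single vertex or a single edge; in particular C is a matching. -/
open Classical

section aux
variable {V : Type*} {G : SimpleGraph V} {ℓ : Sym2 V → ℝ}

lemma walkLen_cons {u v w : V} (h : G.Adj u v) (p : G.Walk v w) :
    walkLen G ℓ (SimpleGraph.Walk.cons h p) = ℓ s(u,v) + walkLen G ℓ p := by
  simp [walkLen]

lemma walkLen_nonneg (hℓ : ∀ e, 0 ≤ ℓ e) {u v : V} (w : G.Walk u v) :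
    0 ≤ walkLen G ℓ w := by
  induction w with
  | nil => simp [walkLen]
  | cons h p ih => rw [walkLen_cons]; exact add_nonneg (hℓ _) ih

lemma gdist_le (hℓ : ∀ e, 0 ≤ ℓ e) {u v : V} (w : G.Walk u v) :
    gdist G ℓ u v ≤ walkLen G ℓ w :=
  csInf_le ⟨0, fun x ⟨w', hw'⟩ => hw' ▸ walkLen_nonneg hℓ w'⟩ ⟨w, rfl⟩

lemma le_gdist {u v : V} (hr : G.Reachable u v) {c : ℝ}
    (h : ∀ w : G.Walk u v, c ≤ walkLen G ℓ w) : c ≤ gdist G ℓ u v :=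
  le_csInf ⟨walkLen G ℓ hr.some, hr.some, rfl⟩ (fun x ⟨w', hw'⟩ => hw' ▸ h w')

lemma walkLen_one {u v : V} (w : G.Walk u v) :
    walkLen G (fun _ => (1:ℝ)) w = w.length := by
  simp [walkLen, SimpleGraph.Walk.length_edges]

end aux

open SimpleGraph

section main
variable {V : Type*} {G : SimpleGraph V} {C : Set (Sym2 V)}

lemma zeroOn_nonneg (C : Set (Sym2 V)) :
    ∀ e, 0 ≤ zeroOn (fun _ => (1:ℝ)) C e := fun e => by
  unfold zeroOn; split <;> norm_num

lemma zeroOn_le_one (C : Set (Sym2 V)) :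
    ∀ e, zeroOn (fun _ => (1:ℝ)) C e ≤ 1 := fun e => by
  unfold zeroOn; split <;> norm_num

lemma walk_three {x z : V} (hne : x ≠ z) (h1 : ¬G.Adj x z)
    (h2 : ∀ m, ¬(G.Adj x m ∧ G.Adj m z)) (w : G.Walk x z) : 3 ≤ w.length := by
  match w with
  | .nil => exact absurd rfl hne
  | .cons h .nil => exact absurd h h1
  | .cons h (.cons h' .nil) => exact absurd ⟨h, h'⟩ (h2 _)
  | .cons h (.cons h' (.cons h'' p)) => simp only [Walk.length_cons]; omega

lemma walkLen_ge_one (hC : C ⊆ G.edgeSet) {x z : V} (w : G.Walk x z) :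
    ¬(fromEdgeSet C).Reachable x z → 1 ≤ walkLen G (zeroOn (fun _ => 1) C) w := by
  induction w with
  | nil => exact fun h => absurd (Reachable.refl _) h
  | @cons a b z h p ih =>
    intro hxz
    rw [walkLen_cons]
    by_cases he : s(a, b) ∈ C
    · have hr : ¬(fromEdgeSet C).Reachable b z := fun hr =>
        hxz ((Adj.reachable ((fromEdgeSet_adj _).mpr ⟨he, h.ne⟩)).trans hr)
      have h0 : zeroOn (fun _ => (1:ℝ)) C s(a,b) = 0 := if_pos he
      rw [h0]; linarith [ih hr]
    · have h0 : zeroOn (fun _ => (1:ℝ)) C s(a,b) = 1 := if_neg he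
      rw [h0]; linarith [walkLen_nonneg (zeroOn_nonneg C) p]

lemma engine (hconn : G.Connected) (hC : C ⊆ G.edgeSet)
    (hweak : ∀ u v : V, gdist G (zeroOn (fun _ => (1 : ℝ)) C) u v = 0 ∨
       gdist G (fun _ => (1 : ℝ)) u v / 2 ≤ gdist G (zeroOn (fun _ => (1 : ℝ)) C) u v)
    {x z s : V} (hxz : ¬(fromEdgeSet C).Reachable x z) (hadj : G.Adj x s)
    (hsz : (fromEdgeSet C).Reachable s z) :
    G.Adj x z ∨ ∃ m, G.Adj x m ∧ G.Adj m z := by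
  obtain ⟨p⟩ := hsz
  have hpe : ∀ e ∈ p.edges, e ∈ C := by
    intro e he
    have := p.edges_subset_edgeSet he
    rw [edgeSet_fromEdgeSet] at this
    exact this.1
  let q : G.Walk s z := p.transfer G (fun e he => hC (hpe e he))
  have hq0 : walkLen G (zeroOn (fun _ => 1) C) q = 0 := by
    apply List.sum_eq_zero
    intro r hr
    obtain ⟨e, he, rfl⟩ := List.mem_map.mp hr
    have : e ∈ p.edges := by rwa [Walk.edges_transfer] at he
    exact if_pos (hpe e this)
  have hd0le : gdist G (zeroOn (fun _ => 1) C) x z ≤ 1 := by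
    have h1 : gdist G (zeroOn (fun _ => 1) C) x z ≤
        walkLen G (zeroOn (fun _ => 1) C) (Walk.cons hadj q) :=
      gdist_le (zeroOn_nonneg C) _
    rw [walkLen_cons, hq0] at h1
    have := zeroOn_le_one C s(x, s)
    linarith
  have hd0ge : 1 ≤ gdist G (zeroOn (fun _ => 1) C) x z :=
    le_gdist (hconn x z) (fun w => walkLen_ge_one hC w hxz)
  rcases hweak x z with h | h
  · linarith
  · by_contra hcon
    push_neg at hcon
    have hne : x ≠ z := fun hh => hxz (hh ▸ Reachable.refl x)
    have h3 : (3:ℝ) ≤ gdist G (fun _ => 1) x z := by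
      apply le_gdist (hconn x z)
      intro w
      rw [walkLen_one]
      exact_mod_cast walk_three hne hcon.1 (fun m hm => hcon.2 m hm.1 hm.2) w
    linarith
end main

section ML
variable {V : Type*} [Fintype V] {G : SimpleGraph V} {C : Set (Sym2 V)}

lemma cycle_six' (hg : 6 ≤ G.girth) {a : V} (w : G.Walk a a) (hw : w.IsCycle) :
    6 ≤ w.length := by
  have hna : ¬G.IsAcyclic := fun h => by simp [h.girth_eq_zero] at hg
  have h1 : G.egirth ≠ ⊤ := fun h => hna (egirth_eq_top.mp h)
  have h2 : (6 : ℕ∞) ≤ G.egirth := by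
    rw [← ENat.coe_toNat h1]
    exact_mod_cast hg
  exact_mod_cast (le_egirth.mp h2) a w hw

lemma noC3 (hg : 6 ≤ G.girth) {a b c : V} (h1 : G.Adj a b) (h2 : G.Adj b c)
    (h3 : G.Adj c a) : False := by
  have hcyc : (Walk.cons h1 (Walk.cons h2 (Walk.cons h3 Walk.nil))).IsCycle := by
    simp [Walk.isCycle_def, Walk.isTrail_def, List.Nodup, Sym2.eq_iff,
      h1.ne, h2.ne, h3.ne, h1.ne', h2.ne', h3.ne']
  have := cycle_six' hg _ hcyc
  simp at this

lemma noC4 (hg : 6 ≤ G.girth) {a b c d : V} (h1 : G.Adj a b) (h2 : G.Adj b c)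
    (h3 : G.Adj c d) (h4 : G.Adj d a) (hac : a ≠ c) (hbd : b ≠ d) : False := by
  have hcyc : (Walk.cons h1 (Walk.cons h2 (Walk.cons h3 (Walk.cons h4 Walk.nil)))).IsCycle := by
    simp [Walk.isCycle_def, Walk.isTrail_def, List.Nodup, Sym2.eq_iff,
      h1.ne, h2.ne, h3.ne, h4.ne, h1.ne', h2.ne', h3.ne', h4.ne',
      hac, hbd, hac.symm, hbd.symm]
  have := cycle_six' hg _ hcyc
  simp at this

lemma noC5 (hg : 6 ≤ G.girth) {a b c d e : V} (h1 : G.Adj a b) (h2 : G.Adj b c)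
    (h3 : G.Adj c d) (h4 : G.Adj d e) (h5 : G.Adj e a)
    (hac : a ≠ c) (had : a ≠ d) (hbd : b ≠ d) (hbe : b ≠ e) (hce : c ≠ e) : False := by
  have hcyc : (Walk.cons h1 (Walk.cons h2 (Walk.cons h3 (Walk.cons h4
      (Walk.cons h5 Walk.nil))))).IsCycle := by
    simp [Walk.isCycle_def, Walk.isTrail_def, List.Nodup, Sym2.eq_iff,
      h1.ne, h2.ne, h3.ne, h4.ne, h5.ne, h1.ne', h2.ne', h3.ne', h4.ne', h5.ne',
      hac, hbd, hac.symm, hbd.symm, had, had.symm, hbe, hbe.symm, hce, hce.symm]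
  have := cycle_six' hg _ hcyc
  simp at this

lemma exists_second_neighbor (hdeg : 2 ≤ G.degree u) (v : V) :
    ∃ u', G.Adj u u' ∧ u' ≠ v := by
  obtain ⟨u', hu'mem, hu'ne⟩ :=
    Finset.exists_mem_ne (by rw [SimpleGraph.card_neighborFinset_eq_degree]; omega : 1 < (G.neighborFinset u).card) v
  exact ⟨u', (SimpleGraph.mem_neighborFinset _ _ _).mp hu'mem, hu'ne⟩

lemma no_incident (hconn : G.Connected) (hgirth : 6 ≤ G.girth)
    (hdeg : ∀ v : V, 2 ≤ G.degree v) (hC : C ⊆ G.edgeSet)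
    (hdisc : ¬ (SimpleGraph.fromEdgeSet C).Preconnected)
    (hweak : ∀ u v : V, gdist G (zeroOn (fun _ => (1 : ℝ)) C) u v = 0 ∨
       gdist G (fun _ => (1 : ℝ)) u v / 2 ≤ gdist G (zeroOn (fun _ => (1 : ℝ)) C) u v)
    {u v w : V} (huv : s(u, v) ∈ C) (hvw : s(v, w) ∈ C) (huw : u ≠ w) : False := by
  have hau : G.Adj u v := hC huv
  have havw : G.Adj v w := hC hvw
  have hKu : (fromEdgeSet C).Reachable v u :=
    (Adj.reachable ((fromEdgeSet_adj _).mpr ⟨by rwa [Sym2.eq_swap], hau.ne'⟩))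
  have hKw : (fromEdgeSet C).Reachable v w :=
    (Adj.reachable ((fromEdgeSet_adj _).mpr ⟨hvw, havw.ne⟩))
  -- Step B: every neighbor of u is in the component of v
  have hNB : ∀ y, G.Adj u y → (fromEdgeSet C).Reachable v y := by
    intro y hy
    by_contra hyK
    have hyw : ¬(fromEdgeSet C).Reachable y w := fun hr => hyK (hKw.trans hr.symm)
    rcases engine hconn hC hweak hyw hy.symm (hKu.symm.trans hKw) with hadj | ⟨m, hym, hmw⟩
    · have hyv : y ≠ v := fun h => hyK (by subst h; exact Reachable.refl _)
      exact noC4 hgirth hy.symm hau havw hadj.symm hyv huw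
    · have hyv : y ≠ v := fun h => hyK (by subst h; exact Reachable.refl _)
      have hyw' : y ≠ w := fun h => hyK (h ▸ hKw)
      have hum : u ≠ m := by
        intro h; subst h; exact noC3 hgirth hau havw hmw.symm
      have hvm : v ≠ m := by
        intro h; subst h; exact noC3 hgirth hy.symm hau hym.symm
      exact noC5 hgirth hy.symm hau havw hmw.symm hym.symm hyv hyw' huw hum hvm
  -- existence of a vertex outside the component
  have hex : ∃ x, ¬(fromEdgeSet C).Reachable v x := by
    by_contra hno
    push_neg at hno
    exact hdisc (fun a b => (hno a).symm.trans (hno b))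
  obtain ⟨x₀, hx₀⟩ := hex
  -- find a boundary edge
  have key : ∀ {a b : V} (p : G.Walk a b), (fromEdgeSet C).Reachable v a →
      ¬(fromEdgeSet C).Reachable v b →
      ∃ x s, ¬(fromEdgeSet C).Reachable v x ∧ G.Adj x s ∧ (fromEdgeSet C).Reachable v s := by
    intro a b p
    induction p with
    | nil => exact fun h1 h2 => absurd h1 h2
    | @cons a c b h p ih =>
      intro h1 h2
      by_cases hc : (fromEdgeSet C).Reachable v c
      · exact ih hc h2
      · exact ⟨c, a, hc, h.symm, h1⟩
  obtain ⟨x, s, hxK, hxs, hsK⟩ := key (hconn v x₀).some (Reachable.refl v) hx₀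
  have hxu : x ≠ u := fun h => hxK (h ▸ hKu)
  have hxv : x ≠ v := fun h => hxK (by subst h; exact Reachable.refl _)
  have hxw : x ≠ w := fun h => hxK (h ▸ hKw)
  have hxru : ¬(fromEdgeSet C).Reachable x u := fun hr => hxK (hKu.trans hr.symm)
  have hxrv : ¬(fromEdgeSet C).Reachable x v := fun hr => hxK hr.symm
  have hxrw : ¬(fromEdgeSet C).Reachable x w := fun hr => hxK (hKw.trans hr.symm)
  by_cases hAxv : G.Adj x v
  · obtain ⟨u', hu'adj, hu'v⟩ := exists_second_neighbor (hdeg u) v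
    have hu'K : (fromEdgeSet C).Reachable v u' := hNB u' hu'adj
    have hxru' : ¬(fromEdgeSet C).Reachable x u' := fun hr => hxK (hu'K.trans hr.symm)
    rcases engine hconn hC hweak hxru' hAxv hu'K with hadj | ⟨m, hxm, hmu'⟩
    · exact noC4 hgirth hAxv hau.symm hu'adj hadj.symm hxu hu'v.symm
    · have hxu' : x ≠ u' := fun h => hxK (h ▸ hu'K)
      have hvm : v ≠ m := by
        intro h; subst h; exact noC3 hgirth hau.symm hu'adj hmu'.symm
      have hum : u ≠ m := by
        intro h; subst h; exact noC3 hgirth hAxv hau.symm hxm.symm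
      exact noC5 hgirth hAxv hau.symm hu'adj hmu'.symm hxm.symm hxu hxu' hu'v.symm hvm hum
  · by_cases hAxu : G.Adj x u
    · rcases engine hconn hC hweak hxrw hxs (hsK.symm.trans hKw) with hadj | ⟨q, hxq, hqw⟩
      · exact noC4 hgirth hAxu hau havw hadj.symm hxv huw
      · have huq : u ≠ q := by
          intro h; subst h; exact noC3 hgirth hau havw hqw.symm
        have hvq : v ≠ q := by
          intro h; subst h; exact hAxv hxq
        exact noC5 hgirth hAxu hau havw hqw.symm hxq.symm hxv hxw huw huq hvq
    · by_cases hAxw : G.Adj x w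
      · rcases engine hconn hC hweak hxru hxs (hsK.symm.trans hKu) with hadj | ⟨m, hxm, hmu⟩
        · exact hAxu hadj
        · have hwm : w ≠ m := by
            intro h; subst h; exact noC3 hgirth hau havw hmu
          have hvm : v ≠ m := by
            intro h; subst h; exact hAxv hxm
          exact noC5 hgirth hAxw havw.symm hau.symm hmu.symm hxm.symm hxv hxu huw.symm hwm hvm
      · rcases engine hconn hC hweak hxru hxs (hsK.symm.trans hKu) with hadj | ⟨m, hxm, hmu⟩
        · exact hAxu hadj
        · rcases engine hconn hC hweak hxrv hxs hsK.symm with hadj | ⟨p, hxp, hpv⟩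
          · exact hAxv hadj
          · have hmv : m ≠ v := by
              intro h; subst h; exact hAxv hxm
            have hmp : m ≠ p := by
              intro h; subst h; exact noC3 hgirth hmu hau hpv.symm
            have hup : u ≠ p := by
              intro h; subst h; exact hAxu hxp
            exact noC5 hgirth hxm hmu hau hpv.symm hxp.symm hxu hxv hmv hmp hup
end ML

theorem weak_contraction_components {V : Type*} [Fintype V] (G : SimpleGraph V)
    (hconn : G.Connected) (hgirth : 6 ≤ G.girth) (hdeg : ∀ v : V, 2 ≤ G.degree v)
    (C : Set (Sym2 V)) (hC : C ⊆ G.edgeSet)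
    (hdisc : ¬ (SimpleGraph.fromEdgeSet C).Preconnected)
    (hweak : ∀ u v : V, gdist G (zeroOn (fun _ => (1 : ℝ)) C) u v = 0 ∨
       gdist G (fun _ => (1 : ℝ)) u v / 2 ≤ gdist G (zeroOn (fun _ => (1 : ℝ)) C) u v) :
    (∀ u v : V, (SimpleGraph.fromEdgeSet C).Reachable u v → u = v ∨ s(u, v) ∈ C) ∧
    (∀ e ∈ C, ∀ f ∈ C, e ≠ f → ∀ x : V, x ∈ e → x ∉ f) := by
  have ML : ∀ {u v w : V}, s(u, v) ∈ C → s(v, w) ∈ C → u ≠ w → False :=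
    fun h1 h2 h3 => no_incident hconn hgirth hdeg hC hdisc hweak h1 h2 h3
  constructor
  · intro u v hr
    obtain ⟨p⟩ := hr
    have key : ∀ n (u : V) (p : (fromEdgeSet C).Walk u v), p.length = n →
        u = v ∨ s(u, v) ∈ C := by
      intro n
      induction n using Nat.strong_induction_on with
      | _ n ih =>
        intro u p hn
        cases p with
        | nil => exact Or.inl rfl
        | @cons _ y _ h q =>
          have h1 : s(u, y) ∈ C := ((fromEdgeSet_adj _).mp h).1
          cases q with
          | nil => exact Or.inr h1
          | @cons _ z _ h2 r =>
            have h2' : s(y, z) ∈ C := ((fromEdgeSet_adj _).mp h2).1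
            by_cases hz : u = z
            · subst hz
              simp only [Walk.length_cons] at hn
              exact ih r.length (by omega) u r rfl
            · exact (ML h1 h2' hz).elim
    exact key p.length u p rfl
  · intro e he f hf hef x hx hxf
    obtain ⟨a, rfl⟩ := Sym2.mem_iff_exists.mp hx
    obtain ⟨b, rfl⟩ := Sym2.mem_iff_exists.mp hxf
    have hab : a ≠ b := fun h => hef (by rw [h])
    exact ML (by rwa [Sym2.eq_swap]) hf hab
end

section
/- Let k ≥ 2 be an integer and let G be a graph with unit edge lengths and girth 2k+1. If C ⊆ E(G) is a (k−1, 1)-contraction (dist_{ℓ_C}(u,v) ≥ dist(u,v)/(k−1) − 1 for all u,v), then: every connected component of (V, C) is a tree of diameter at most k−1, there is at most one edge of G between any two distinct components, and consequently the contracted graph G/C has at least m(G) − n(G) edges. -/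
open Classical

open SimpleGraph in
lemma exists_cycle_of_two_paths {V : Type*} {G : SimpleGraph V} {a b : V} (p : G.Walk a b) :
    p.IsPath → ∀ q : G.Walk a b, q.IsPath → p ≠ q →
    ∃ (x : V) (c : G.Walk x x), c.IsCycle ∧ c.length ≤ p.length + q.length := by
  induction p with
  | nil =>
    intro _ q hq hne
    cases q with
    | nil => exact absurd rfl hne
    | cons h q' =>
      rw [Walk.cons_isPath_iff] at hq
      exact absurd q'.end_mem_support hq.2
  | @cons a x b h p' ih =>
    intro hp q hq hne
    cases q with
    | nil =>
      rw [Walk.cons_isPath_iff] at hp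
      exact absurd p'.end_mem_support hp.2
    | @cons _ y _ h2 q' =>
      rw [Walk.cons_isPath_iff] at hp hq
      by_cases hxy : x = y
      · subst hxy
        have hne' : p' ≠ q' := by rintro rfl; exact hne rfl
        obtain ⟨z, c, hc, hl⟩ := ih hp.1 q' hq.1 hne'
        exact ⟨z, c, hc, by simp only [Walk.length_cons]; omega⟩
      · have he1 : s(a, x) ∉ p'.edges := fun hm => hp.2 (p'.fst_mem_support_of_mem_edges hm)
        have he2 : s(a, x) ∉ (Walk.cons h2 q').edges := by
          simp only [Walk.edges_cons, List.mem_cons]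
          rintro (hh | hm)
          · exact hxy (Sym2.congr_right.mp hh)
          · exact hq.2 (q'.fst_mem_support_of_mem_edges hm)
        set W := p'.append (Walk.cons h2 q').reverse with hW
        have heW : s(a, x) ∉ W.bypass.edges := by
          intro hm
          have hmem := W.edges_bypass_subset hm
          rw [hW, Walk.edges_append, Walk.edges_reverse, List.mem_append,
            List.mem_reverse] at hmem
          rcases hmem with h' | h'
          · exact he1 h'
          · exact he2 h'
        refine ⟨a, Walk.cons h W.bypass, ?_, ?_⟩
        · exact (Walk.cons_isCycle_iff _ _).mpr ⟨W.bypass_isPath, heW⟩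
        · have hb1 : W.bypass.length ≤ W.length := W.length_bypass_le
          have hb2 : W.length = p'.length + (q'.length + 1) := by
            rw [hW, Walk.length_append, Walk.length_reverse, Walk.length_cons]
          simp only [Walk.length_cons]
          omega

open SimpleGraph in
lemma forest_edgeSet_ncard_le {V : Type*} [Fintype V] (H : SimpleGraph V)
    (hH : H.IsAcyclic) : H.edgeSet.ncard ≤ Fintype.card V := by
  classical
  have hsupp : ∀ (r z y : V) (p : H.Walk r z), y ∈ p.support → y ≠ z →
      H.dist r y < p.length := by
    intro r z y p hy hyz
    have hlen : (p.takeUntil y hy).length + (p.dropUntil y hy).length = p.length := by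
      have := congrArg Walk.length (p.take_spec hy)
      rwa [Walk.length_append] at this
    have hd : (p.dropUntil y hy).length ≠ 0 := fun h0 => hyz (Walk.eq_of_length_eq_zero h0)
    have ht := SimpleGraph.dist_le (p.takeUntil y hy)
    omega
  have key1 : ∀ (r x y : V), H.Reachable r x → H.Adj x y → H.dist r x ≠ H.dist r y := by
    intro r x y hrx hxy heq
    have hry : H.Reachable r y := hrx.trans hxy.reachable
    obtain ⟨px, hpx, hlx⟩ := hrx.exists_path_of_dist
    obtain ⟨py, hpy, hly⟩ := hry.exists_path_of_dist
    have hyx : y ≠ x := fun h => H.irrefl (h ▸ hxy)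
    have hynot : y ∉ px.support := by
      intro hy
      have := hsupp r x y px hy hyx
      omega
    have hq1 : (Walk.cons hxy.symm px.reverse).IsPath := by
      rw [Walk.cons_isPath_iff]
      exact ⟨hpx.reverse, by rwa [Walk.support_reverse, List.mem_reverse]⟩
    have heqp := hH.path_unique ⟨Walk.cons hxy.symm px.reverse, hq1⟩ ⟨py.reverse, hpy.reverse⟩
    have hlen := congrArg (fun p : H.Path y r => p.1.length) heqp
    simp only [Walk.length_cons, Walk.length_reverse] at hlen
    omega
  have key2 : ∀ (r x a b : V), H.Reachable r a → H.Reachable r b → H.Adj x a → H.Adj x b →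
      H.dist r a < H.dist r x → H.dist r b < H.dist r x → a = b := by
    intro r x a b hra hrb hxa hxb hda hdb
    obtain ⟨pa, hpa, hla⟩ := hra.exists_path_of_dist
    obtain ⟨pb, hpb, hlb⟩ := hrb.exists_path_of_dist
    have hxa' : x ∉ pa.support := by
      intro hx
      have hne : x ≠ a := fun h => H.irrefl (h ▸ hxa)
      have := hsupp r a x pa hx hne
      omega
    have hxb' : x ∉ pb.support := by
      intro hx
      have hne : x ≠ b := fun h => H.irrefl (h ▸ hxb)
      have := hsupp r b x pb hx hne
      omega
    have hq1 : (Walk.cons hxa pa.reverse).IsPath := by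
      rw [Walk.cons_isPath_iff]
      exact ⟨hpa.reverse, by rwa [Walk.support_reverse, List.mem_reverse]⟩
    have hq2 : (Walk.cons hxb pb.reverse).IsPath := by
      rw [Walk.cons_isPath_iff]
      exact ⟨hpb.reverse, by rwa [Walk.support_reverse, List.mem_reverse]⟩
    have heqp := hH.path_unique ⟨Walk.cons hxa pa.reverse, hq1⟩ ⟨Walk.cons hxb pb.reverse, hq2⟩
    have hs := congrArg (fun p : H.Path x r => p.1.support) heqp
    simp only [Walk.support_cons] at hs
    rw [pa.reverse.support_eq_cons, pb.reverse.support_eq_cons] at hs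
    simp only [List.cons.injEq, true_and] at hs
    exact hs.1
  have hrep' : ∀ e : Sym2 V, ∃ p : V × V, e = s(p.1, p.2) :=
    Sym2.ind fun a b => ⟨(a, b), rfl⟩
  choose rep hrep using hrep'
  set root : V → V := fun v => Quot.out (H.connectedComponentMk v) with hrootdef
  have hroot : ∀ v, H.Reachable (root v) v := by
    intro v
    exact SimpleGraph.ConnectedComponent.exact (Quot.out_eq (H.connectedComponentMk v))
  have hroot_adj : ∀ u v : V, H.Adj u v → root u = root v := by
    intro u v h
    simp only [hrootdef]
    rw [SimpleGraph.ConnectedComponent.sound h.reachable]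
  set f : Sym2 V → V := fun e =>
    if H.dist (root (rep e).1) (rep e).1 < H.dist (root (rep e).1) (rep e).2 then (rep e).2
    else (rep e).1 with hfdef
  have main : ∀ e ∈ H.edgeSet, ∃ a : V, e = s(a, f e) ∧ H.Adj (f e) a ∧
      H.dist (root (f e)) a < H.dist (root (f e)) (f e) := by
    intro e he
    have hadj : H.Adj (rep e).1 (rep e).2 := by
      rw [hrep e] at he
      exact H.mem_edgeSet.mp he
    have hrx : H.Reachable (root (rep e).1) (rep e).1 := hroot _
    have hne := key1 (root (rep e).1) _ _ hrx hadj
    by_cases hlt : H.dist (root (rep e).1) (rep e).1 < H.dist (root (rep e).1) (rep e).2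
    · have hfe : f e = (rep e).2 := by simp only [hfdef]; rw [if_pos hlt]
      refine ⟨(rep e).1, ?_, ?_, ?_⟩
      · rw [hfe]; exact hrep e
      · rw [hfe]; exact hadj.symm
      · rw [hfe, ← hroot_adj _ _ hadj]; exact hlt
    · have hgt : H.dist (root (rep e).1) (rep e).2 < H.dist (root (rep e).1) (rep e).1 :=
        lt_of_le_of_ne (not_lt.mp hlt) (Ne.symm hne)
      have hfe : f e = (rep e).1 := by simp only [hfdef]; rw [if_neg hlt]
      refine ⟨(rep e).2, ?_, ?_, ?_⟩
      · rw [hfe, Sym2.eq_swap]; exact hrep e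
      · rw [hfe]; exact hadj
      · rw [hfe]; exact hgt
  have hinj : Set.InjOn f H.edgeSet := by
    intro e1 he1 e2 he2 hfe
    obtain ⟨a, hea, haadj, halt⟩ := main e1 he1
    obtain ⟨b, heb, hbadj, hblt⟩ := main e2 he2
    rw [← hfe] at heb hbadj hblt
    have hra : H.Reachable (root (f e1)) a := (hroot _).trans haadj.reachable
    have hrb : H.Reachable (root (f e1)) b := (hroot _).trans hbadj.reachable
    have hab := key2 (root (f e1)) (f e1) a b hra hrb haadj hbadj halt hblt
    rw [hea, heb, hab]
  have hfin := Set.ncard_le_ncard_of_injOn f (fun a _ => Set.mem_univ (f a)) hinj Set.finite_univ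
  rwa [Set.ncard_univ, Nat.card_eq_fintype_card] at hfin

open SimpleGraph in
lemma lenF0 {V : Type*} (G : SimpleGraph V) (hconn : G.Connected) (k : ℕ) (hk : 2 ≤ k)
    (C : Set (Sym2 V))
    (hgc : ∀ (x : V) (c : G.Walk x x), c.IsCycle → 2 * k + 1 ≤ c.length)
    (hrd : ∀ u v : V, (SimpleGraph.fromEdgeSet C).Reachable u v → G.dist u v ≤ k - 1)
    {u v : V} (P : G.Walk u v) (hP : P.IsPath) (hPC : ∀ e ∈ P.edges, e ∈ C) :
    P.length ≠ k := by
  intro hlen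
  by_cases huv : u = v
  · subst huv
    rw [Walk.isPath_iff_eq_nil] at hP
    rw [hP] at hlen
    simp only [Walk.length_nil] at hlen
    omega
  · have hedges : ∀ e ∈ P.edges, e ∈ (SimpleGraph.fromEdgeSet C).edgeSet := by
      intro e he
      rw [SimpleGraph.edgeSet_fromEdgeSet]
      exact ⟨hPC e he, G.not_isDiag_of_mem_edgeSet (P.edges_subset_edgeSet he)⟩
    have hr : (SimpleGraph.fromEdgeSet C).Reachable u v := ⟨P.transfer _ hedges⟩
    have hd := hrd u v hr
    obtain ⟨q, hq, hql⟩ := (hconn.preconnected u v).exists_path_of_dist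
    have hne : q ≠ P := by intro h; rw [h] at hql; omega
    obtain ⟨x, c, hc, hcl⟩ := exists_cycle_of_two_paths q hq P hP hne
    have := hgc x c hc
    omega

open SimpleGraph in
lemma lenF {V : Type*} (G : SimpleGraph V) (hconn : G.Connected) (k : ℕ) (hk : 2 ≤ k)
    (C : Set (Sym2 V))
    (hgc : ∀ (x : V) (c : G.Walk x x), c.IsCycle → 2 * k + 1 ≤ c.length)
    (hrd : ∀ u v : V, (SimpleGraph.fromEdgeSet C).Reachable u v → G.dist u v ≤ k - 1)
    {u v : V} (P : G.Walk u v) :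
    P.IsPath → (∀ e ∈ P.edges, e ∈ C) → P.length ≤ k - 1 := by
  induction P with
  | nil => intro _ _; simp
  | cons h P' ih =>
    intro hP hPC
    have h1 := ih hP.of_cons
      (fun e he => hPC e (by rw [Walk.edges_cons]; exact List.mem_cons_of_mem _ he))
    have h2 := lenF0 G hconn k hk C hgc hrd (Walk.cons h P') hP hPC
    simp only [Walk.length_cons] at h2 ⊢
    omega

theorem girth_contraction_lower_bound {V : Type*} [Fintype V] (G : SimpleGraph V)
    (hconn : G.Connected) (k : ℕ) (hk : 2 ≤ k)
    (hgirth : G.girth = (2 * k + 1 : ℕ))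
    (C : Set (Sym2 V)) (hC : C ⊆ G.edgeSet)
    (hcontr : ∀ u v : V, gdist G (fun _ => (1 : ℝ)) u v / ((k : ℝ) - 1) - 1 ≤
        gdist G (zeroOn (fun _ => (1 : ℝ)) C) u v) :
    (SimpleGraph.fromEdgeSet C).IsAcyclic ∧
    (∀ u v : V, (SimpleGraph.fromEdgeSet C).Reachable u v →
        (SimpleGraph.fromEdgeSet C).dist u v ≤ k - 1) ∧
    (∀ u v u' v' : V, G.Adj u v → G.Adj u' v' →
        (SimpleGraph.fromEdgeSet C).Reachable u u' →
        (SimpleGraph.fromEdgeSet C).Reachable v v' →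
        ¬ (SimpleGraph.fromEdgeSet C).Reachable u v →
        s(u, v) = s(u', v')) ∧
    ((G.edgeSet.ncard : ℤ) - Fintype.card V ≤
      ({e | e ∈ G.edgeSet ∧ ∃ u v : V, e = s(u, v) ∧
        ¬ (SimpleGraph.fromEdgeSet C).Reachable u v} : Set (Sym2 V)).ncard) := by
  classical
  -- cycles are long
  have hgc : ∀ (x : V) (c : G.Walk x x), c.IsCycle → 2 * k + 1 ≤ c.length := by
    intro x c hc
    have h1 : G.egirth ≤ (c.length : ℕ∞) :=
      le_trans (le_trans (iInf_le _ x) (iInf_le _ c)) (iInf_le _ hc)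
    have h2 : G.egirth ≠ ⊤ := by
      intro htop
      have hac := SimpleGraph.egirth_eq_top.mp htop
      have h0 := hac.girth_eq_zero
      omega
    have h3 : (G.girth : ℕ∞) = G.egirth := ENat.coe_toNat h2
    rw [← h3, hgirth] at h1
    exact_mod_cast h1
  -- unit walk lengths
  have hlist : ∀ l : List (Sym2 V), (l.map fun _ => (1 : ℝ)).sum = l.length := by
    intro l
    induction l with
    | nil => simp
    | cons a t ih => simp [ih, add_comm]
  have hwl1 : ∀ {u v : V} (w : G.Walk u v),
      walkLen G (fun _ => (1 : ℝ)) w = w.length := by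
    intro u v w
    rw [walkLen, hlist, SimpleGraph.Walk.length_edges]
  have hunit : ∀ u v : V, gdist G (fun _ => (1 : ℝ)) u v = G.dist u v := by
    intro u v
    apply IsLeast.csInf_eq
    constructor
    · obtain ⟨p, hp⟩ := (hconn.preconnected u v).exists_walk_length_eq_dist
      exact ⟨p, by rw [hwl1 p, hp]⟩
    · rintro x ⟨w, rfl⟩
      rw [hwl1 w]
      exact_mod_cast G.dist_le w
  have hnonneg : ∀ {u v : V} (w : G.Walk u v),
      0 ≤ walkLen G (zeroOn (fun _ => (1 : ℝ)) C) w := by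
    intro u v w
    apply List.sum_nonneg
    intro x hx
    obtain ⟨e, _, rfl⟩ := List.mem_map.mp hx
    unfold zeroOn
    split <;> norm_num
  -- distance bound from the contraction hypothesis
  have hrd : ∀ u v : V, (SimpleGraph.fromEdgeSet C).Reachable u v → G.dist u v ≤ k - 1 := by
    intro u v hr
    obtain ⟨w0⟩ := hr
    have hedges : ∀ e ∈ w0.edges, e ∈ G.edgeSet := by
      intro e he
      have h1 := w0.edges_subset_edgeSet he
      rw [SimpleGraph.edgeSet_fromEdgeSet] at h1
      exact hC h1.1
    have hWzero : walkLen G (zeroOn (fun _ => (1 : ℝ)) C) (w0.transfer G hedges) = 0 := by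
      apply List.sum_eq_zero
      intro x hx
      obtain ⟨e, he, rfl⟩ := List.mem_map.mp hx
      have heC : e ∈ C := by
        rw [SimpleGraph.Walk.edges_transfer] at he
        have h2 := w0.edges_subset_edgeSet he
        rw [SimpleGraph.edgeSet_fromEdgeSet] at h2
        exact h2.1
      simp [zeroOn, heC]
    have hle0 : gdist G (zeroOn (fun _ => (1 : ℝ)) C) u v ≤ 0 := by
      apply csInf_le
      · exact ⟨0, by rintro x ⟨w, rfl⟩; exact hnonneg w⟩
      · exact ⟨w0.transfer G hedges, hWzero⟩
    have hcon := hcontr u v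
    rw [hunit u v] at hcon
    have hkpos : (0 : ℝ) < (k : ℝ) - 1 := by
      have h2 : (2 : ℝ) ≤ (k : ℝ) := by exact_mod_cast hk
      linarith
    have hdiv : (G.dist u v : ℝ) / ((k : ℝ) - 1) ≤ 1 := by linarith
    rw [div_le_one hkpos] at hdiv
    have hcast : ((k - 1 : ℕ) : ℝ) = (k : ℝ) - 1 := by
      have h1 : 1 ≤ k := by omega
      push_cast [h1]
      ring
    rw [← hcast] at hdiv
    exact_mod_cast hdiv
  -- helper: short C-paths realizing reachability in the contraction graph
  have hCpath : ∀ u v : V, (SimpleGraph.fromEdgeSet C).Reachable u v →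
      ∃ P : G.Walk u v, P.IsPath ∧ (∀ e ∈ P.edges, e ∈ C) ∧ P.length ≤ k - 1 ∧
        (SimpleGraph.fromEdgeSet C).dist u v ≤ P.length := by
    intro u v hr
    obtain ⟨w0⟩ := hr
    set p := w0.bypass with hp
    have hpC : ∀ e ∈ p.edges, e ∈ C := by
      intro e he
      have h1 := p.edges_subset_edgeSet he
      rw [SimpleGraph.edgeSet_fromEdgeSet] at h1
      exact h1.1
    have hpG : ∀ e ∈ p.edges, e ∈ G.edgeSet := fun e he => hC (hpC e he)
    refine ⟨p.transfer G hpG, (w0.bypass_isPath).transfer hpG, ?_, ?_, ?_⟩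
    · intro e he
      rw [SimpleGraph.Walk.edges_transfer] at he
      exact hpC e he
    · exact lenF G hconn k hk C hgc hrd (p.transfer G hpG)
        ((w0.bypass_isPath).transfer hpG)
        (fun e he => hpC e (by rwa [SimpleGraph.Walk.edges_transfer] at he))
    · rw [SimpleGraph.Walk.length_transfer]
      exact SimpleGraph.dist_le p
  -- Part 1: acyclicity
  have hacy : (SimpleGraph.fromEdgeSet C).IsAcyclic := by
    intro x c hc
    cases c with
    | nil => exact hc.ne_nil rfl
    | @cons _ y _ h p =>
      rw [SimpleGraph.Walk.isCycle_def] at hc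
      obtain ⟨htrail, -, hnodup⟩ := hc
      have hpPath : p.IsPath := by
        apply SimpleGraph.Walk.IsPath.mk'
        simpa using hnodup
      have hpedges : s(x, y) ∉ p.edges := by
        have := htrail.edges_nodup
        rw [SimpleGraph.Walk.edges_cons, List.nodup_cons] at this
        exact this.1
      have hxyC : s(x, y) ∈ C := ((SimpleGraph.fromEdgeSet_adj _).mp h).1
      have hpC : ∀ e ∈ p.edges, e ∈ C := by
        intro e he
        have h1 := p.edges_subset_edgeSet he
        rw [SimpleGraph.edgeSet_fromEdgeSet] at h1
        exact h1.1
      have hpG : ∀ e ∈ p.edges, e ∈ G.edgeSet := fun e he => hC (hpC e he)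
      set P := p.transfer G hpG with hP
      have hPpath : P.IsPath := hpPath.transfer hpG
      have hPC : ∀ e ∈ P.edges, e ∈ C :=
        fun e he => hpC e (by rwa [hP, SimpleGraph.Walk.edges_transfer] at he)
      have hPlen : P.length ≤ k - 1 := lenF G hconn k hk C hgc hrd P hPpath hPC
      have hxyG : G.Adj x y := G.mem_edgeSet.mp (hC hxyC)
      have hPe : s(x, y) ∉ P.edges := by
        rwa [hP, SimpleGraph.Walk.edges_transfer]
      have hcyc : (SimpleGraph.Walk.cons hxyG P).IsCycle :=
        (SimpleGraph.Walk.cons_isCycle_iff _ _).mpr ⟨hPpath, hPe⟩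
      have hbig := hgc x _ hcyc
      rw [SimpleGraph.Walk.length_cons] at hbig
      omega
  refine ⟨hacy, ?_, ?_, ?_⟩
  -- Part 2
  · intro u v hr
    obtain ⟨P, -, -, hl, hd⟩ := hCpath u v hr
    omega
  -- Part 3
  · intro u v u' v' huv hu'v' hru hrv hnr
    by_contra hne
    obtain ⟨Pu, hPu, hPuC, hPul, -⟩ := hCpath u u' hru
    obtain ⟨Pv, hPv, hPvC, hPvl, -⟩ := hCpath v v' hrv
    have heC : s(u, v) ∉ C := by
      intro hmem
      exact hnr (SimpleGraph.Adj.reachable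
        ((SimpleGraph.fromEdgeSet_adj _).mpr ⟨hmem, G.ne_of_adj huv⟩))
    set W := Pv.append (SimpleGraph.Walk.cons hu'v'.symm Pu.reverse) with hW
    have heW : s(u, v) ∉ W.edges := by
      rw [hW, SimpleGraph.Walk.edges_append, SimpleGraph.Walk.edges_cons,
        SimpleGraph.Walk.edges_reverse]
      simp only [List.mem_append, List.mem_cons, List.mem_reverse]
      rintro (hm | hm | hm)
      · exact heC (hPvC _ hm)
      · apply hne
        rw [Sym2.eq_swap (a := u') (b := v')]
        exact hm
      · exact heC (hPuC _ hm)
    have heB : s(u, v) ∉ W.bypass.edges := fun hm => heW (W.edges_bypass_subset hm)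
    have hcyc : (SimpleGraph.Walk.cons huv W.bypass).IsCycle :=
      (SimpleGraph.Walk.cons_isCycle_iff _ _).mpr ⟨W.bypass_isPath, heB⟩
    have hlen := hgc u _ hcyc
    have hb1 : W.bypass.length ≤ W.length := W.length_bypass_le
    have hb2 : W.length = Pv.length + (Pu.length + 1) := by
      rw [hW, SimpleGraph.Walk.length_append, SimpleGraph.Walk.length_cons,
        SimpleGraph.Walk.length_reverse]
    rw [SimpleGraph.Walk.length_cons] at hlen
    omega
  -- Part 4
  · set T := ({e | e ∈ G.edgeSet ∧ ∃ u v : V, e = s(u, v) ∧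
      ¬ (SimpleGraph.fromEdgeSet C).Reachable u v} : Set (Sym2 V)) with hT
    have hTE : T ⊆ G.edgeSet := fun e he => he.1
    have hdiff : G.edgeSet \ T = C := by
      ext e
      constructor
      · rintro ⟨heE, heT⟩
        revert heE heT
        refine Sym2.inductionOn e ?_
        intro u v heE heT
        have hr : (SimpleGraph.fromEdgeSet C).Reachable u v := by
          by_contra hnr
          exact heT ⟨heE, u, v, rfl, hnr⟩
        have hadj : G.Adj u v := G.mem_edgeSet.mp heE
        show s(u, v) ∈ C
        by_contra hnc
        obtain ⟨P, hP, hPC, hPl, -⟩ := hCpath u v hr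
        have hnE : s(v, u) ∉ P.edges := by
          intro hm
          rw [Sym2.eq_swap] at hm
          exact hnc (hPC _ hm)
        have hcyc : (SimpleGraph.Walk.cons hadj.symm P).IsCycle :=
          (SimpleGraph.Walk.cons_isCycle_iff _ _).mpr ⟨hP, hnE⟩
        have hlen := hgc v _ hcyc
        rw [SimpleGraph.Walk.length_cons] at hlen
        omega
      · intro heC
        refine ⟨hC heC, ?_⟩
        rintro ⟨-, u, v, huv, hnr⟩
        subst huv
        have hne : u ≠ v := G.ne_of_adj (G.mem_edgeSet.mp (hC heC))
        exact hnr (SimpleGraph.Adj.reachable ((SimpleGraph.fromEdgeSet_adj _).mpr ⟨heC, hne⟩))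
    have hHE : (SimpleGraph.fromEdgeSet C).edgeSet = C := by
      rw [SimpleGraph.edgeSet_fromEdgeSet]
      ext e
      constructor
      · exact fun h => h.1
      · exact fun h => ⟨h, G.not_isDiag_of_mem_edgeSet (hC h)⟩
    have hCn : C.ncard ≤ Fintype.card V := by
      rw [← hHE]
      exact forest_edgeSet_ncard_le _ hacy
    have hsum := Set.ncard_diff_add_ncard_of_subset hTE (Set.toFinite _)
    rw [hdiff] at hsum
    omega
end
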